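/- arXiv:1508.04601 — 11 statements merged into one kernel-verified Lean document; each statement's English description precedes it below -/
import Mathlib

section
/- (Main Theorem, ND-case, lower estimate.) Define B^{ND} = sup_{−M ≤ n ≤ N} (Σ_{i=−M}^{n} u_i)^(1/q) · (Σ_{j=n}^{N} v̂_j)^(1/p*). If A ≥ 0 is a constant such that (Σ_{n=−M}^{N} u_n |x_n|^q)^(1/q) ≤ A · (Σ_{n=−M}^{N} v_n |x_n − x_{n+1}|^p)^(1/p) holds for every real sequence (x_n)_{n=−M}^{N+1} with x_{N+1} = 0, then A ≥ B^{ND}. -/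
/-!
Test the inequality on the sequence that equals `V = ∑_{j=n}^{N} v̂_j` up to index `n`, then
decreases by `v̂_i` at each step `i ≥ n` down to `x_{N+1} = 0`. Since `v_i v̂_i^p = v̂_i`, the
right-hand side is `A V^{1/p}`, while the left-hand side is at least `(∑_{i ≤ n} u_i)^{1/q} V`;
dividing by `V^{1/p}` bounds each term of the supremum `B` by `A`.
-/

open Finset

noncomputable def tailTest (w : ℤ → ℝ) (n N : ℤ) (i : ℤ) : ℝ :=
  ∑ j ∈ Icc (max i n) N, w j

section tailTest

variable (w : ℤ → ℝ) {n N : ℤ}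

theorem tailTest_succ_right : tailTest w n N (N + 1) = 0 :=
  sum_eq_zero fun j hj => by
    have := mem_Icc.mp hj
    omega

theorem tailTest_of_le {i : ℤ} (hi : i ≤ n) : tailTest w n N i = ∑ j ∈ Icc n N, w j := by
  rw [tailTest, max_eq_right hi]

theorem tailTest_sub_tailTest_succ {i : ℤ} (hiN : i ≤ N) :
    tailTest w n N i - tailTest w n N (i + 1) = if n ≤ i then w i else 0 := by
  split_ifs with hni
  · rw [tailTest, tailTest, max_eq_left hni, max_eq_left (by omega),
      ← insert_Icc_add_one_left_eq_Icc hiN, sum_insert (by simp)]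
    ring
  · rw [tailTest_of_le w (by omega : i ≤ n), tailTest_of_le w (by omega : i + 1 ≤ n), sub_self]

theorem sum_mul_abs_tailTest_sub_rpow {p : ℝ} (hp : p ≠ 0) {M : ℤ} (hMn : -M ≤ n)
    (v : ℤ → ℝ) :
    ∑ i ∈ Icc (-M) N, v i * |tailTest w n N i - tailTest w n N (i + 1)| ^ p =
      ∑ i ∈ Icc n N, v i * |w i| ^ p := by
  have hfilter : (Icc (-M) N).filter (n ≤ ·) = Icc n N := by
    ext i
    simp only [mem_filter, mem_Icc]
    omega
  rw [← hfilter, sum_filter]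
  refine sum_congr rfl fun i hi => ?_
  rw [tailTest_sub_tailTest_succ w (mem_Icc.mp hi).2]
  split_ifs
  · rfl
  · rw [abs_zero, Real.zero_rpow hp, mul_zero]

theorem sum_mul_abs_rpow_le_sum_mul_abs_tailTest_rpow (q : ℝ) {M : ℤ} (hnN : n ≤ N)
    (u : ℤ → ℝ) (hu : ∀ i ∈ Icc (-M) N, 0 ≤ u i) :
    (∑ i ∈ Icc (-M) n, u i) * |∑ j ∈ Icc n N, w j| ^ q ≤
      ∑ i ∈ Icc (-M) N, u i * |tailTest w n N i| ^ q := by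
  rw [sum_mul]
  calc ∑ i ∈ Icc (-M) n, u i * |∑ j ∈ Icc n N, w j| ^ q
      = ∑ i ∈ Icc (-M) n, u i * |tailTest w n N i| ^ q :=
        sum_congr rfl fun i hi => by rw [tailTest_of_le w (mem_Icc.mp hi).2]
    _ ≤ ∑ i ∈ Icc (-M) N, u i * |tailTest w n N i| ^ q :=
        sum_le_sum_of_subset_of_nonneg (Icc_subset_Icc_right hnN)
          fun i hi _ => mul_nonneg (hu i hi) (by positivity)

end tailTest

theorem mul_rpow_one_sub_conjExponent {p t : ℝ} (hp : p ≠ 1) (ht : 0 < t) :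
    t * (t ^ (1 - p / (p - 1))) ^ p = t ^ (1 - p / (p - 1)) := by
  have hp' : p - 1 ≠ 0 := sub_ne_zero.mpr hp
  rw [← Real.rpow_mul ht.le]
  nth_rewrite 1 [← Real.rpow_one t]
  rw [← Real.rpow_add ht]
  congr 1
  field_simp
  ring

theorem rpow_mul_rpow_one_sub_inv_le {p q U V A : ℝ} (hq : 0 < q) (hU : 0 ≤ U) (hV : 0 < V)
    (h : (U * V ^ q) ^ (1 / q) ≤ A * V ^ (1 / p)) :
    U ^ (1 / q) * V ^ (1 - 1 / p) ≤ A := by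
  rw [Real.mul_rpow hU (by positivity), ← Real.rpow_mul hV.le, mul_one_div_cancel hq.ne',
    Real.rpow_one] at h
  rw [← mul_le_mul_iff_of_pos_right (Real.rpow_pos_of_pos hV (1 / p)), mul_assoc,
    ← Real.rpow_add hV, sub_add_cancel, Real.rpow_one]
  exact h

theorem nd_lower_general (p q : ℝ) (hp : 1 < p) (hpq : p ≤ q)
    (M N : ℤ)
    (u v : ℤ → ℝ)
    (hu : ∀ n ∈ Finset.Icc (-M) N, 0 < u n)
    (hv : ∀ n ∈ Finset.Icc (-M) N, 0 < v n)
    (B : ℝ)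
    (hB : B = ⨆ n ∈ Finset.Icc (-M) N,
      (∑ i ∈ Finset.Icc (-M) n, u i) ^ (1/q) *
        (∑ j ∈ Finset.Icc n N, v j ^ (1 - p/(p-1))) ^ (1 - 1/p))
    (A : ℝ) (hA : 0 ≤ A)
    (hineq : ∀ x : ℤ → ℝ, x (N+1) = 0 →
      (∑ n ∈ Finset.Icc (-M) N, u n * |x n| ^ q) ^ (1/q) ≤
        A * (∑ n ∈ Finset.Icc (-M) N, v n * |x n - x (n+1)| ^ p) ^ (1/p)) :
    B ≤ A := by
  have hq : 0 < q := by linarith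
  subst hB
  refine Real.iSup_le (fun n => Real.iSup_le (fun hn => ?_) hA) hA
  obtain ⟨hMn, hnN⟩ := mem_Icc.mp hn
  set w : ℤ → ℝ := fun j => v j ^ (1 - p / (p - 1))
  have hvn : ∀ j ∈ Icc n N, 0 < v j := fun j hj =>
    hv j (Icc_subset_Icc_left hMn hj)
  have hV : 0 < ∑ j ∈ Icc n N, w j :=
    sum_pos (fun j hj => Real.rpow_pos_of_pos (hvn j hj) _) ⟨n, by simp [hnN]⟩
  have henergy : ∑ i ∈ Icc (-M) N, v i * |tailTest w n N i - tailTest w n N (i + 1)| ^ p =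
      ∑ j ∈ Icc n N, w j := by
    rw [sum_mul_abs_tailTest_sub_rpow w (by linarith) hMn]
    refine sum_congr rfl fun j hj => ?_
    rw [abs_of_pos (Real.rpow_pos_of_pos (hvn j hj) _),
      mul_rpow_one_sub_conjExponent hp.ne' (hvn j hj)]
  have hu' : ∀ i ∈ Icc (-M) N, 0 ≤ u i := fun i hi => (hu i hi).le
  have hU : 0 ≤ ∑ i ∈ Icc (-M) n, u i :=
    sum_nonneg fun i hi => hu' i (Icc_subset_Icc_right hnN hi)
  have htest := hineq (tailTest w n N) (tailTest_succ_right w)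
  rw [henergy] at htest
  refine rpow_mul_rpow_one_sub_inv_le hq hU hV (le_trans ?_ htest)
  refine Real.rpow_le_rpow (mul_nonneg hU (by positivity)) ?_ (one_div_nonneg.mpr hq.le)
  simpa only [abs_of_pos hV] using sum_mul_abs_rpow_le_sum_mul_abs_tailTest_rpow w q hnN u hu'

/-- Main Theorem, ND-case, lower estimate. -/
theorem nd_lower (p q : ℝ) (hp : 1 < p) (hpq : p ≤ q)
    (M N : ℤ) (hMN : -M ≤ N)
    (u v : ℤ → ℝ)
    (hu : ∀ n ∈ Finset.Icc (-M) N, 0 < u n)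
    (hv : ∀ n ∈ Finset.Icc (-M) N, 0 < v n)
    (B : ℝ)
    (hB : B = ⨆ n ∈ Finset.Icc (-M) N,
      (∑ i ∈ Finset.Icc (-M) n, u i) ^ (1/q) *
        (∑ j ∈ Finset.Icc n N, v j ^ (1 - p/(p-1))) ^ (1 - 1/p))
    (A : ℝ) (hA : 0 ≤ A)
    (hineq : ∀ x : ℤ → ℝ, x (N+1) = 0 →
      (∑ n ∈ Finset.Icc (-M) N, u n * |x n| ^ q) ^ (1/q) ≤
        A * (∑ n ∈ Finset.Icc (-M) N, v n * |x n - x (n+1)| ^ p) ^ (1/p)) :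
    B ≤ A :=
  nd_lower_general p q hp hpq M N u v hu hv B hB A hA hineq
end

section
/- (Main Theorem, DN-case, lower estimate.) Define B^{DN} = sup_{−M ≤ n ≤ N} (Σ_{i=−M}^{n} v̂_i)^(1/p*) · (Σ_{j=n}^{N} u_j)^(1/q). If A ≥ 0 is a constant such that (Σ_{n=−M}^{N} u_n |x_n|^q)^(1/q) ≤ A · (Σ_{n=−M}^{N} v_n |x_n − x_{n−1}|^p)^(1/p) holds for every real sequence (x_n)_{n=−M−1}^{N} with x_{−M−1} = 0, then A ≥ B^{DN}. -/
/-!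
Test the inequality on the sequence `x k = ∑_{i=-M}^{min k n} v̂ i`, which rises on `[-M, n]` and
is constant afterwards. Since `v · v̂ ^ p = v̂`, the right-hand side equals `A V ^ (1/p)` with
`V = ∑_{i=-M}^{n} v̂ i`, while the left-hand side is at least `V (∑_{j=n}^{N} u j) ^ (1/q)`.
Dividing by `V ^ (1/p)` bounds the `n`-th term of `B` by `A`.
-/

open Finset

noncomputable def truncPartialSum (w : ℤ → ℝ) (a n k : ℤ) : ℝ :=
  ∑ i ∈ Icc a (min k n), w i

section truncPartialSum

variable (w : ℤ → ℝ) {a n k : ℤ}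

theorem truncPartialSum_of_lt (hk : k < a) : truncPartialSum w a n k = 0 := by
  rw [truncPartialSum, Icc_eq_empty (by omega), sum_empty]

theorem truncPartialSum_of_le (hk : n ≤ k) :
    truncPartialSum w a n k = ∑ i ∈ Icc a n, w i := by
  rw [truncPartialSum, min_eq_right hk]

theorem truncPartialSum_sub_pred_of_mem (hk : k ∈ Icc a n) :
    truncPartialSum w a n k - truncPartialSum w a n (k - 1) = w k := by
  rw [mem_Icc] at hk
  have hIcc : Icc a k = insert k (Icc a (k - 1)) := by
    ext j
    simp only [mem_Icc, mem_insert]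
    omega
  rw [truncPartialSum, truncPartialSum, min_eq_left hk.2, min_eq_left (by omega), hIcc,
    sum_insert (by simp), add_sub_cancel_right]

theorem truncPartialSum_sub_pred_of_lt (hk : n < k) :
    truncPartialSum w a n k - truncPartialSum w a n (k - 1) = 0 := by
  rw [truncPartialSum_of_le w hk.le, truncPartialSum_of_le w (by omega), sub_self]

theorem sum_mul_abs_truncPartialSum_sub_pred_rpow {b : ℤ} (hnb : n ≤ b) (v : ℤ → ℝ)
    {p : ℝ} (hp : p ≠ 0) :
    ∑ k ∈ Icc a b, v k * |truncPartialSum w a n k - truncPartialSum w a n (k - 1)| ^ p =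
      ∑ k ∈ Icc a n, v k * |w k| ^ p := by
  symm
  refine sum_subset_zero_on_sdiff (Icc_subset_Icc le_rfl hnb) (fun k hk => ?_) (fun k hk => ?_)
  · have hnk : n < k := by simp only [mem_sdiff, mem_Icc] at hk; omega
    rw [truncPartialSum_sub_pred_of_lt w hnk, abs_zero, Real.zero_rpow hp, mul_zero]
  · rw [truncPartialSum_sub_pred_of_mem w hk]

theorem rpow_mul_sum_le_sum_mul_abs_truncPartialSum_rpow {b : ℤ} (han : a ≤ n) {u : ℤ → ℝ}
    (hu : ∀ k ∈ Icc a b, 0 ≤ u k) (q : ℝ) :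
    |∑ i ∈ Icc a n, w i| ^ q * ∑ k ∈ Icc n b, u k ≤
      ∑ k ∈ Icc a b, u k * |truncPartialSum w a n k| ^ q := by
  rw [mul_sum]
  calc ∑ k ∈ Icc n b, |∑ i ∈ Icc a n, w i| ^ q * u k
      = ∑ k ∈ Icc n b, u k * |truncPartialSum w a n k| ^ q := by
        refine sum_congr rfl fun k hk => ?_
        rw [truncPartialSum_of_le w (mem_Icc.mp hk).1, mul_comm]
    _ ≤ ∑ k ∈ Icc a b, u k * |truncPartialSum w a n k| ^ q :=
        sum_le_sum_of_subset_of_nonneg (Icc_subset_Icc han le_rfl) fun k hk _ =>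
          mul_nonneg (hu k hk) (by positivity)

end truncPartialSum

theorem mul_rpow_rpow_one_sub_div_sub_one {v p : ℝ} (hv : 0 < v) (hp : 1 < p) :
    v * (v ^ (1 - p / (p - 1))) ^ p = v ^ (1 - p / (p - 1)) := by
  have hp1 : p - 1 ≠ 0 := by linarith
  rw [← Real.rpow_mul hv.le]
  nth_rewrite 1 [← Real.rpow_one v]
  rw [← Real.rpow_add hv]
  congr 1
  field_simp
  ring

theorem rpow_one_sub_inv_mul_le_of_mul_le {V C A p : ℝ} (hV : 0 < V)
    (h : V * C ≤ A * V ^ (1 / p)) : V ^ (1 - 1 / p) * C ≤ A := by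
  have hsplit : V = V ^ (1 - 1 / p) * V ^ (1 / p) := by
    rw [← Real.rpow_add hV, sub_add_cancel, Real.rpow_one]
  nth_rewrite 1 [hsplit] at h
  rw [mul_right_comm] at h
  exact le_of_mul_le_mul_right h (Real.rpow_pos_of_pos hV _)

theorem rpow_sum_mul_rpow_sum_le_of_discrete_hardy {p q A : ℝ} (hp : 1 < p) (hq : 0 < q) {a b n : ℤ}
    (hn : n ∈ Icc a b) {u v : ℤ → ℝ} (hu : ∀ k ∈ Icc a b, 0 ≤ u k)
    (hv : ∀ k ∈ Icc a b, 0 < v k)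
    (hineq : ∀ x : ℤ → ℝ, x (a - 1) = 0 →
      (∑ k ∈ Icc a b, u k * |x k| ^ q) ^ (1 / q) ≤
        A * (∑ k ∈ Icc a b, v k * |x k - x (k - 1)| ^ p) ^ (1 / p)) :
    (∑ i ∈ Icc a n, v i ^ (1 - p / (p - 1))) ^ (1 - 1 / p) * (∑ j ∈ Icc n b, u j) ^ (1 / q)
      ≤ A := by
  obtain ⟨han, hnb⟩ := mem_Icc.mp hn
  set w : ℤ → ℝ := fun i => v i ^ (1 - p / (p - 1))
  set V := ∑ i ∈ Icc a n, w i
  set U := ∑ j ∈ Icc n b, u j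
  have hw : ∀ i ∈ Icc a n, 0 < w i := fun i hi =>
    Real.rpow_pos_of_pos (hv i (Icc_subset_Icc le_rfl hnb hi)) _
  have hV : 0 < V := sum_pos hw ⟨n, mem_Icc.mpr ⟨han, le_rfl⟩⟩
  have hU : 0 ≤ U := sum_nonneg fun j hj => hu j (Icc_subset_Icc han le_rfl hj)
  have energy : ∑ k ∈ Icc a b, v k *
      |truncPartialSum w a n k - truncPartialSum w a n (k - 1)| ^ p = V := by
    rw [sum_mul_abs_truncPartialSum_sub_pred_rpow w hnb v (by positivity)]
    refine sum_congr rfl fun i hi => ?_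
    rw [abs_of_pos (hw i hi)]
    exact mul_rpow_rpow_one_sub_div_sub_one (hv i (Icc_subset_Icc le_rfl hnb hi)) hp
  have hardy := hineq (truncPartialSum w a n) (truncPartialSum_of_lt w (by omega))
  rw [energy] at hardy
  refine rpow_one_sub_inv_mul_le_of_mul_le hV (le_trans ?_ hardy)
  calc V * U ^ (1 / q) = (|V| ^ q * U) ^ (1 / q) := by
        rw [abs_of_pos hV, Real.mul_rpow (by positivity) hU, one_div,
          Real.rpow_rpow_inv hV.le hq.ne']
    _ ≤ _ := Real.rpow_le_rpow (by positivity)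
        (rpow_mul_sum_le_sum_mul_abs_truncPartialSum_rpow w han hu q) (by positivity)

theorem dn_lower_general (p q : ℝ) (hp : 1 < p) (hpq : p ≤ q)
    (M N : ℤ)
    (u v : ℤ → ℝ)
    (hu : ∀ n ∈ Finset.Icc (-M) N, 0 < u n)
    (hv : ∀ n ∈ Finset.Icc (-M) N, 0 < v n)
    (B : ℝ)
    (hB : B = ⨆ n ∈ Finset.Icc (-M) N,
      (∑ i ∈ Finset.Icc (-M) n, v i ^ (1 - p/(p-1))) ^ (1 - 1/p) *
        (∑ j ∈ Finset.Icc n N, u j) ^ (1/q))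
    (A : ℝ) (hA : 0 ≤ A)
    (hineq : ∀ x : ℤ → ℝ, x (-M-1) = 0 →
      (∑ n ∈ Finset.Icc (-M) N, u n * |x n| ^ q) ^ (1/q) ≤
        A * (∑ n ∈ Finset.Icc (-M) N, v n * |x n - x (n-1)| ^ p) ^ (1/p)) :
    B ≤ A := by
  subst hB
  exact Real.iSup_le (fun n => Real.iSup_le (fun hn =>
    rpow_sum_mul_rpow_sum_le_of_discrete_hardy hp (by linarith) hn (fun k hk => (hu k hk).le) hv hineq) hA) hA

/-- Main Theorem, DN-case, lower estimate. -/
theorem dn_lower (p q : ℝ) (hp : 1 < p) (hpq : p ≤ q)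
    (M N : ℤ) (hMN : -M ≤ N)
    (u v : ℤ → ℝ)
    (hu : ∀ n ∈ Finset.Icc (-M) N, 0 < u n)
    (hv : ∀ n ∈ Finset.Icc (-M) N, 0 < v n)
    (B : ℝ)
    (hB : B = ⨆ n ∈ Finset.Icc (-M) N,
      (∑ i ∈ Finset.Icc (-M) n, v i ^ (1 - p/(p-1))) ^ (1 - 1/p) *
        (∑ j ∈ Finset.Icc n N, u j) ^ (1/q))
    (A : ℝ) (hA : 0 ≤ A)
    (hineq : ∀ x : ℤ → ℝ, x (-M-1) = 0 →
      (∑ n ∈ Finset.Icc (-M) N, u n * |x n| ^ q) ^ (1/q) ≤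
        A * (∑ n ∈ Finset.Icc (-M) N, v n * |x n - x (n-1)| ^ p) ^ (1/p)) :
    B ≤ A :=
  dn_lower_general p q hp hpq M N u v hu hv B hB A hA hineq
end

section
/- (Main Theorem, DD-case, lower estimate.) Define B_*^{DD} = sup_{−M ≤ x < y ≤ N} (Σ_{n=x}^{y−1} u_n)^(1/q) · [ (Σ_{i=−M}^{x} v̂_i)^(1−p) + (Σ_{j=y}^{N} v̂_j)^(1−p) ]^(−1/p). If A ≥ 0 is a constant such that (Σ_{n=−M}^{N} u_n |x_n|^q)^(1/q) ≤ A · (Σ_{n=−M}^{N} v_n |x_n − x_{n−1}|^p)^(1/p) holds for every real sequence (x_n)_{n=−M−1}^{N} with x_{−M−1} = 0 and x_N = 0, then A ≥ B_*^{DD}. -/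
open Finset

private lemma sum_Icc_bot' (f : ℤ → ℝ) {n N : ℤ} (h : n ≤ N) :
    ∑ i ∈ Icc n N, f i = f n + ∑ i ∈ Icc (n+1) N, f i := by
  rw [show Icc n N = insert n (Icc (n+1) N) by ext; simp; omega,
    Finset.sum_insert (by simp)]

private lemma sum_Icc_top' (f : ℤ → ℝ) {M n : ℤ} (h : -M ≤ n) :
    ∑ i ∈ Icc (-M) n, f i = (∑ i ∈ Icc (-M) (n-1), f i) + f n := by
  rw [show Icc (-M) n = insert n (Icc (-M) (n-1)) by ext; simp; omega,
    Finset.sum_insert (by simp), add_comm]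

private lemma dd_key (p q : ℝ) (hp : 1 < p) (hq : 0 < q)
    (M N a b : ℤ) (ha : -M ≤ a) (hab : a < b) (hbN : b ≤ N)
    (u v : ℤ → ℝ) (hu : ∀ n ∈ Finset.Icc (-M) N, 0 < u n)
    (hv : ∀ n ∈ Finset.Icc (-M) N, 0 < v n)
    (A : ℝ)
    (hineq : ∀ x : ℤ → ℝ, x (-M-1) = 0 → x N = 0 →
      (∑ n ∈ Finset.Icc (-M) N, u n * |x n| ^ q) ^ (1/q) ≤
        A * (∑ n ∈ Finset.Icc (-M) N, v n * |x n - x (n-1)| ^ p) ^ (1/p)) :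
    (∑ n ∈ Finset.Icc a (b-1), u n) ^ (1/q) *
        ((∑ i ∈ Finset.Icc (-M) a, v i ^ (1 - p/(p-1))) ^ (1-p) +
          (∑ j ∈ Finset.Icc b N, v j ^ (1 - p/(p-1))) ^ (1-p)) ^ (-(1/p)) ≤ A := by
  have hp0 : (0:ℝ) < p := by linarith
  have hp1 : p - 1 ≠ 0 := by linarith
  set e : ℝ := 1 - p/(p-1) with he
  set w : ℤ → ℝ := fun i => v i ^ e with hw
  have hwpos : ∀ n ∈ Icc (-M) N, 0 < w n := fun n hn => Real.rpow_pos_of_pos (hv n hn) e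
  set V1 : ℝ := ∑ i ∈ Icc (-M) a, w i with hV1def
  set V2 : ℝ := ∑ j ∈ Icc b N, w j with hV2def
  have hV1 : 0 < V1 :=
    Finset.sum_pos (fun i hi => hwpos i (by simp at hi ⊢; omega)) (by simp; omega)
  have hV2 : 0 < V2 :=
    Finset.sum_pos (fun i hi => hwpos i (by simp at hi ⊢; omega)) (by simp; omega)
  have hep : 1 + e * p = e := by rw [he]; field_simp; ring
  have hvw : ∀ n ∈ Icc (-M) N, ∀ V : ℝ, 0 < V → v n * (w n / V) ^ p = w n / V ^ p := by
    intro n hn V hV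
    have hvn := hv n hn
    calc v n * (w n / V) ^ p = v n * ((v n ^ e) ^ p) / V ^ p := by
          rw [Real.div_rpow (hwpos n hn).le hV.le, hw]; ring
      _ = v n ^ (1:ℝ) * v n ^ (e * p) / V ^ p := by
          rw [← Real.rpow_mul hvn.le, Real.rpow_one]
      _ = v n ^ (1 + e * p) / V ^ p := by rw [← Real.rpow_add hvn]
      _ = w n / V ^ p := by rw [hep]
  set x : ℤ → ℝ := fun n => if n ≤ a then (∑ i ∈ Icc (-M) n, w i) / V1
      else if n ≤ b - 1 then 1 else (∑ j ∈ Icc (n+1) N, w j) / V2 with hx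
  have hx0 : x (-M-1) = 0 := by
    simp only [hx]
    rw [if_pos (by omega), Finset.Icc_eq_empty (by omega), Finset.sum_empty, zero_div]
  have hxN : x N = 0 := by
    simp only [hx]
    rw [if_neg (by omega), if_neg (by omega), Finset.Icc_eq_empty (by omega),
      Finset.sum_empty, zero_div]
  have hxone : ∀ n, a ≤ n → n ≤ b - 1 → x n = 1 := by
    intro n h1 h2
    simp only [hx]
    by_cases hna : n ≤ a
    · rw [if_pos hna, show n = a by omega, ← hV1def, div_self hV1.ne']
    · rw [if_neg hna, if_pos h2]
  have hxright : ∀ n, b ≤ n → x (n-1) = (∑ j ∈ Icc n N, w j) / V2 := by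
    intro n h1
    by_cases hnb : n = b
    · rw [hnb, hxone (b-1) (by omega) le_rfl, ← hV2def, div_self hV2.ne']
    · simp only [hx]
      rw [if_neg (by omega), if_neg (by omega)]
      norm_num
  have hsplit : Icc (-M) N = (Icc (-M) a ∪ Icc (a+1) (b-1)) ∪ Icc b N := by
    ext; simp; omega
  have hd1 : Disjoint (Icc (-M) a) (Icc (a+1) (b-1)) := by
    rw [Finset.disjoint_left]; intro n; simp; omega
  have hd2 : Disjoint (Icc (-M) a ∪ Icc (a+1) (b-1)) (Icc b N) := by
    rw [Finset.disjoint_left]; intro n; simp; omega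
  have hsum : ∑ n ∈ Icc (-M) N, v n * |x n - x (n-1)| ^ p = V1 ^ (1-p) + V2 ^ (1-p) := by
    rw [hsplit, Finset.sum_union hd2, Finset.sum_union hd1]
    have hS1 : ∑ n ∈ Icc (-M) a, v n * |x n - x (n-1)| ^ p = V1 ^ (1-p) := by
      have : ∀ n ∈ Icc (-M) a, v n * |x n - x (n-1)| ^ p = w n / V1 ^ p := by
        intro n hn
        simp only [Finset.mem_Icc] at hn
        have hnI : n ∈ Icc (-M) N := by simp; omega
        have hxn : x n = (∑ i ∈ Icc (-M) n, w i) / V1 := by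
          simp only [hx]; rw [if_pos hn.2]
        have hxn1 : x (n-1) = (∑ i ∈ Icc (-M) (n-1), w i) / V1 := by
          simp only [hx]; rw [if_pos (by omega)]
        rw [hxn, hxn1, div_sub_div_same, sum_Icc_top' w hn.1]
        rw [show (∑ i ∈ Icc (-M) (n-1), w i) + w n - ∑ i ∈ Icc (-M) (n-1), w i = w n by ring]
        rw [abs_of_pos (div_pos (hwpos n hnI) hV1), hvw n hnI V1 hV1]
      rw [Finset.sum_congr rfl this, ← Finset.sum_div, ← hV1def,
        Real.rpow_sub hV1, Real.rpow_one]
    have hS2 : ∑ n ∈ Icc (a+1) (b-1), v n * |x n - x (n-1)| ^ p = 0 := by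
      apply Finset.sum_eq_zero
      intro n hn
      simp only [Finset.mem_Icc] at hn
      rw [hxone n (by omega) hn.2, hxone (n-1) (by omega) (by omega)]
      rw [sub_self, abs_zero, Real.zero_rpow hp0.ne', mul_zero]
    have hS3 : ∑ n ∈ Icc b N, v n * |x n - x (n-1)| ^ p = V2 ^ (1-p) := by
      have : ∀ n ∈ Icc b N, v n * |x n - x (n-1)| ^ p = w n / V2 ^ p := by
        intro n hn
        simp only [Finset.mem_Icc] at hn
        have hnI : n ∈ Icc (-M) N := by simp; omega
        have hxn : x n = (∑ j ∈ Icc (n+1) N, w j) / V2 := by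
          simp only [hx]; rw [if_neg (by omega), if_neg (by omega)]
        rw [hxn, hxright n hn.1, div_sub_div_same, sum_Icc_bot' w hn.2]
        rw [show (∑ i ∈ Icc (n+1) N, w i) - (w n + ∑ i ∈ Icc (n+1) N, w i) = -(w n) by ring]
        rw [neg_div, abs_neg, abs_of_pos (div_pos (hwpos n hnI) hV2), hvw n hnI V2 hV2]
      rw [Finset.sum_congr rfl this, ← Finset.sum_div, ← hV2def,
        Real.rpow_sub hV2, Real.rpow_one]
    rw [hS1, hS2, hS3, add_zero]
  have hlow : ∑ n ∈ Icc a (b-1), u n ≤ ∑ n ∈ Icc (-M) N, u n * |x n| ^ q := by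
    calc ∑ n ∈ Icc a (b-1), u n = ∑ n ∈ Icc a (b-1), u n * |x n| ^ q := by
          apply Finset.sum_congr rfl
          intro n hn
          simp only [Finset.mem_Icc] at hn
          rw [hxone n hn.1 hn.2, abs_one, Real.one_rpow, mul_one]
      _ ≤ ∑ n ∈ Icc (-M) N, u n * |x n| ^ q := by
          apply Finset.sum_le_sum_of_subset_of_nonneg
          · intro n hn; simp at hn ⊢; omega
          · intro n hn _
            exact mul_nonneg (hu n hn).le (Real.rpow_nonneg (abs_nonneg _) q)
  have hU0 : 0 ≤ ∑ n ∈ Icc a (b-1), u n :=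
    Finset.sum_nonneg fun n hn => (hu n (by simp at hn ⊢; omega)).le
  have h1 : (∑ n ∈ Icc a (b-1), u n) ^ (1/q) ≤
      (∑ n ∈ Icc (-M) N, u n * |x n| ^ q) ^ (1/q) :=
    Real.rpow_le_rpow hU0 hlow (by positivity)
  have h2 := hineq x hx0 hxN
  rw [hsum] at h2
  have hCpos : 0 < V1 ^ (1-p) + V2 ^ (1-p) :=
    add_pos (Real.rpow_pos_of_pos hV1 _) (Real.rpow_pos_of_pos hV2 _)
  rw [Real.rpow_neg hCpos.le, ← div_eq_mul_inv,
    div_le_iff₀ (Real.rpow_pos_of_pos hCpos _)]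
  exact le_trans h1 h2

/-- Main Theorem, DD-case, lower estimate. -/
theorem dd_lower (p q : ℝ) (hp : 1 < p) (hpq : p ≤ q)
    (M N : ℤ) (hMN : -M ≤ N)
    (u v : ℤ → ℝ)
    (hu : ∀ n ∈ Finset.Icc (-M) N, 0 < u n)
    (hv : ∀ n ∈ Finset.Icc (-M) N, 0 < v n)
    (B : ℝ)
    (hB : B = ⨆ (a : ℤ) (b : ℤ) (_ : -M ≤ a ∧ a < b ∧ b ≤ N),
      (∑ n ∈ Finset.Icc a (b-1), u n) ^ (1/q) *
        ((∑ i ∈ Finset.Icc (-M) a, v i ^ (1 - p/(p-1))) ^ (1-p) +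
          (∑ j ∈ Finset.Icc b N, v j ^ (1 - p/(p-1))) ^ (1-p)) ^ (-(1/p)))
    (A : ℝ) (hA : 0 ≤ A)
    (hineq : ∀ x : ℤ → ℝ, x (-M-1) = 0 → x N = 0 →
      (∑ n ∈ Finset.Icc (-M) N, u n * |x n| ^ q) ^ (1/q) ≤
        A * (∑ n ∈ Finset.Icc (-M) N, v n * |x n - x (n-1)| ^ p) ^ (1/p)) :
    B ≤ A := by
  rw [hB]
  apply Real.iSup_le _ hA
  intro a
  apply Real.iSup_le _ hA
  intro b
  apply Real.iSup_le _ hA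
  intro hab
  exact dd_key p q hp (by linarith) M N a b hab.1 hab.2.1 hab.2.2 u v hu hv A hineq
end

section
/- (Main Theorem, NN-case, lower estimate.) Define B_*^{NN} = sup_{−M ≤ x < y ≤ N} (Σ_{n=x+1}^{y} v̂_n)^(1/p*) · [ (Σ_{i=−M}^{x} u_i)^(1−q*) + (Σ_{j=y}^{N} u_j)^(1−q*) ]^(−1/q*). If A ≥ 0 is a constant such that (Σ_{n=−M}^{N} u_n |x_n − m(x)|^q)^(1/q) ≤ A · (Σ_{n=−M+1}^{N} v_n |x_n − x_{n−1}|^p)^(1/p) holds for every real sequence (x_n)_{n=−M}^{N}, where m(x) is the unique real constant m satisfying Σ_{n=−M}^{N} u_n |x_n − m|^(q−2) (x_n − m) = 0, then A ≥ B_*^{NN}. -/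
/-!
Fix `-M ≤ a < b ≤ N` and test the inequality on the sequence `y` that vanishes up to `a`,
grows by `v̂ n` at each `n ∈ (a, b]` and equals `V = ∑_{a < n ≤ b} v̂ n` from `b` on.
Since `v n * v̂ n ^ p = v̂ n`, the right-hand side is `A * V ^ (1/p)`. On the left, `y` is `0` on
`[-M, a]` and `V` on `[b, N]`, so for the mean `m` of `y` the weighted Hölder inequality applied to
`V ≤ |m| + |V - m|` bounds `V` by the left-hand side times `(U₁ ^ (1-q*) + U₂ ^ (1-q*)) ^ (1/q*)`,
where `U₁`, `U₂` are the `u`-masses of the two ends. Rearranging gives that every term of the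
supremum is at most `A`.
-/

open Finset Real Filter Topology

theorem sum_abs_le_weighted_Lp_mul {ι : Type*} (s : Finset ι) {q : ℝ} (hq : 1 < q)
    (U c : ι → ℝ) (hU : ∀ i ∈ s, 0 < U i) :
    ∑ i ∈ s, |c i| ≤ (∑ i ∈ s, U i * |c i| ^ q) ^ (1 / q) *
      (∑ i ∈ s, U i ^ (1 - q / (q - 1))) ^ (1 - 1 / q) := by
  have hconj : q.HolderConjugate (q / (q - 1)) := (holderConjugate_iff_eq_conjExponent hq).2 rfl
  have hq0 : q ≠ 0 := by linarith
  have hq1 : q - 1 ≠ 0 := by linarith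
  have hexp : 1 / (q / (q - 1)) = 1 - 1 / q := by field_simp
  calc ∑ i ∈ s, |c i| = ∑ i ∈ s, U i ^ (1 / q) * |c i| * U i ^ (-(1 / q)) := by
        refine sum_congr rfl fun i hi => ?_
        rw [mul_right_comm, ← rpow_add (hU i hi)]; simp
    _ ≤ (∑ i ∈ s, (U i ^ (1 / q) * |c i|) ^ q) ^ (1 / q) *
          (∑ i ∈ s, (U i ^ (-(1 / q))) ^ (q / (q - 1))) ^ (1 / (q / (q - 1))) :=
        inner_le_Lp_mul_Lq_of_nonneg s hconj
          (fun i hi => mul_nonneg (rpow_nonneg (hU i hi).le _) (abs_nonneg _))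
          (fun i hi => rpow_nonneg (hU i hi).le _)
    _ = _ := by
        rw [hexp]
        congr 2 <;> refine sum_congr rfl fun i hi => ?_
        · rw [mul_rpow (rpow_nonneg (hU i hi).le _) (abs_nonneg _), ← rpow_mul (hU i hi).le,
            one_div_mul_cancel hq0, rpow_one]
        · rw [← rpow_mul (hU i hi).le]; congr 1; field_simp; ring

theorem continuous_abs_rpow_mul_self {r : ℝ} (hr : -1 < r) :
    Continuous fun t : ℝ => |t| ^ r * t := by
  refine continuous_iff_continuousAt.2 fun x => ?_
  rcases eq_or_ne x 0 with rfl | hx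
  · have hr1 : r + 1 ≠ 0 := by linarith
    have hnorm : ∀ t : ℝ, ‖|t| ^ r * t‖ = |t| ^ (r + 1) := by
      intro t
      rcases eq_or_ne t 0 with rfl | ht
      · simp [zero_rpow hr1]
      · rw [norm_mul, norm_of_nonneg (rpow_nonneg (abs_nonneg t) _), norm_eq_abs,
          rpow_add_one (abs_ne_zero.2 ht)]
    have hcont : Tendsto (fun t : ℝ => |t| ^ (r + 1)) (𝓝 0) (𝓝 0) := by
      simpa [zero_rpow hr1] using
        (continuous_abs.rpow_const fun _ => Or.inr (by linarith : 0 ≤ r + 1)).tendsto (0 : ℝ)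
    rw [ContinuousAt, mul_zero, tendsto_zero_iff_norm_tendsto_zero]
    simpa only [hnorm] using hcont
  · exact (continuous_abs.continuousAt.rpow_const (Or.inl (abs_ne_zero.2 hx))).mul
      continuousAt_id

theorem exists_sum_mul_abs_rpow_mul_sub_eq_zero {ι : Type*} (s : Finset ι)
    {r : ℝ} (hr : -1 < r) (u x : ι → ℝ) (hu : ∀ i ∈ s, 0 < u i) :
    ∃ m : ℝ, ∑ i ∈ s, u i * |x i - m| ^ r * (x i - m) = 0 := by
  set F : ℝ → ℝ := fun m => ∑ i ∈ s, u i * |x i - m| ^ r * (x i - m)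
  have hF : Continuous F := continuous_finsetSum _ fun i _ => by
    simp_rw [mul_assoc]
    exact continuous_const.mul
      ((continuous_abs_rpow_mul_self hr).comp (continuous_const.sub continuous_id))
  set R := ∑ i ∈ s, |x i|
  have hxR : ∀ i ∈ s, |x i| ≤ R := fun i hi =>
    single_le_sum (f := fun i => |x i|) (fun j _ => abs_nonneg _) hi
  have hlow : 0 ≤ F (-R - 1) := by
    refine sum_nonneg fun i hi => ?_
    have h : 0 < x i - (-R - 1) := by linarith [neg_abs_le (x i), hxR i hi]
    exact (mul_pos (mul_pos (hu i hi) (rpow_pos_of_pos (abs_pos.2 h.ne') _)) h).le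
  have hhigh : F (R + 1) ≤ 0 := by
    refine sum_nonpos fun i hi => ?_
    have h : x i - (R + 1) < 0 := by linarith [le_abs_self (x i), hxR i hi]
    exact (mul_neg_of_pos_of_neg (mul_pos (hu i hi) (rpow_pos_of_pos (abs_pos.2 h.ne) _)) h).le
  have hR : 0 ≤ R := sum_nonneg fun i _ => abs_nonneg (x i)
  obtain ⟨m, -, hm⟩ := intermediate_value_Icc' (by linarith : -R - 1 ≤ R + 1)
    hF.continuousOn ⟨hhigh, hlow⟩
  exact ⟨m, hm⟩

noncomputable def clampedPartialSum (w : ℤ → ℝ) (a b n : ℤ) : ℝ :=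
  ∑ i ∈ Icc (a + 1) (min n b), w i

namespace clampedPartialSum

variable {w : ℤ → ℝ} {a b n : ℤ}

theorem of_le (h : n ≤ a) : clampedPartialSum w a b n = 0 := by
  rw [clampedPartialSum, Icc_eq_empty (by omega), sum_empty]

theorem of_ge (h : b ≤ n) : clampedPartialSum w a b n = ∑ i ∈ Icc (a + 1) b, w i := by
  rw [clampedPartialSum, min_eq_right h]

theorem sub_pred :
    clampedPartialSum w a b n - clampedPartialSum w a b (n - 1) =
      if n ∈ Icc (a + 1) b then w n else 0 := by
  by_cases hna : n ≤ a
  · rw [if_neg (by simp; omega), of_le hna, of_le (by omega), sub_self]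
  by_cases hbn : b < n
  · rw [if_neg (by simp; omega), of_ge hbn.le, of_ge (by omega), sub_self]
  rw [if_pos (by simp; omega), clampedPartialSum, clampedPartialSum, min_eq_left (by omega),
    min_eq_left (by omega), ← insert_Icc_sub_one_right_eq_Icc (by omega : a + 1 ≤ n),
    sum_insert (by simp), add_sub_cancel_right]

theorem sum_mul_abs_sub_pred_rpow {s : Finset ℤ} (hs : Icc (a + 1) b ⊆ s) (c : ℤ → ℝ)
    {p : ℝ} (hp : p ≠ 0) :
    ∑ n ∈ s, c n * |clampedPartialSum w a b n - clampedPartialSum w a b (n - 1)| ^ p =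
      ∑ n ∈ Icc (a + 1) b, c n * |w n| ^ p := by
  rw [← inter_eq_right.2 hs, ← sum_ite_mem]
  refine sum_congr rfl fun n _ => ?_
  rw [sub_pred]
  split_ifs <;> simp [zero_rpow hp]

end clampedPartialSum

theorem sum_mul_abs_sub_rpow_ge_of_two_levels {u y : ℤ → ℝ} {c a b d : ℤ} {y₁ y₂ m q : ℝ}
    (hca : c ≤ a) (hab : a < b) (hbd : b ≤ d) (hu : ∀ n ∈ Icc c d, 0 ≤ u n)
    (hy₁ : ∀ n ≤ a, y n = y₁) (hy₂ : ∀ n ≥ b, y n = y₂) :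
    (∑ i ∈ Icc c a, u i) * |y₁ - m| ^ q + (∑ j ∈ Icc b d, u j) * |y₂ - m| ^ q ≤
      ∑ n ∈ Icc c d, u n * |y n - m| ^ q := by
  have hdisj : Disjoint (Icc c a) (Icc b d) := disjoint_left.2 fun i hi hi' => by
    simp only [mem_Icc] at hi hi'; omega
  have hsub : Icc c a ∪ Icc b d ⊆ Icc c d := union_subset
    (Icc_subset_Icc_right (by omega)) (Icc_subset_Icc_left (by omega))
  calc (∑ i ∈ Icc c a, u i) * |y₁ - m| ^ q + (∑ j ∈ Icc b d, u j) * |y₂ - m| ^ q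
      = ∑ n ∈ Icc c a ∪ Icc b d, u n * |y n - m| ^ q := by
        rw [sum_union hdisj, sum_mul, sum_mul]
        congr 1 <;> refine sum_congr rfl fun n hn => ?_ <;> simp only [mem_Icc] at hn
        · rw [hy₁ n hn.2]
        · rw [hy₂ n hn.1]
    _ ≤ _ := sum_le_sum_of_subset_of_nonneg hsub fun n hn _ =>
        mul_nonneg (hu n hn) (rpow_nonneg (abs_nonneg _) q)

theorem mul_rpow_one_sub_div_sub_one_rpow {p v : ℝ} (hp : p ≠ 1) (hv : 0 < v) :
    v * (v ^ (1 - p / (p - 1))) ^ p = v ^ (1 - p / (p - 1)) := by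
  have hp1 : p - 1 ≠ 0 := sub_ne_zero.2 hp
  rw [← rpow_mul hv.le]
  nth_rewrite 1 [← rpow_one v]
  rw [← rpow_add hv]
  congr 1
  field_simp
  ring

theorem rpow_one_sub_mul_rpow_neg_le {V K A p r : ℝ} (hV : 0 < V) (hK : 0 < K)
    (h : V ≤ A * V ^ (1 / p) * K ^ r) : V ^ (1 - 1 / p) * K ^ (-r) ≤ A := by
  have hVp : 0 < V ^ (1 / p) := rpow_pos_of_pos hV _
  have hKr : 0 < K ^ r := rpow_pos_of_pos hK _
  rw [rpow_sub hV, rpow_one, rpow_neg hK.le, ← div_eq_mul_inv, div_div,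
    div_le_iff₀ (by positivity)]
  linarith

theorem supremand_le_of_poincare_ineq {p q : ℝ} (hp : 1 < p) (hq : 1 < q) {M N : ℤ}
    {u v : ℤ → ℝ} (hu : ∀ n ∈ Icc (-M) N, 0 < u n)
    (hv : ∀ n ∈ Icc (-M) N, 0 < v n) {A : ℝ}
    (hineq : ∀ x : ℤ → ℝ, ∀ m : ℝ,
      (∑ n ∈ Icc (-M) N, u n * |x n - m| ^ (q - 2) * (x n - m) = 0) →
      (∑ n ∈ Icc (-M) N, u n * |x n - m| ^ q) ^ (1 / q) ≤
        A * (∑ n ∈ Icc (-M + 1) N, v n * |x n - x (n - 1)| ^ p) ^ (1 / p))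
    {a b : ℤ} (ha : -M ≤ a) (hab : a < b) (hb : b ≤ N) :
    (∑ n ∈ Icc (a + 1) b, v n ^ (1 - p / (p - 1))) ^ (1 - 1 / p) *
        ((∑ i ∈ Icc (-M) a, u i) ^ (1 - q / (q - 1)) +
          (∑ j ∈ Icc b N, u j) ^ (1 - q / (q - 1))) ^ (-(1 - 1 / q)) ≤ A := by
  set w : ℤ → ℝ := fun n => v n ^ (1 - p / (p - 1))
  set y := clampedPartialSum w a b
  set V := ∑ n ∈ Icc (a + 1) b, w n
  set U₁ := ∑ i ∈ Icc (-M) a, u i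
  set U₂ := ∑ j ∈ Icc b N, u j
  have hsub : Icc (a + 1) b ⊆ Icc (-M + 1) N := Icc_subset_Icc (by omega) hb
  have hw : ∀ n ∈ Icc (a + 1) b, 0 < w n := fun n hn =>
    rpow_pos_of_pos (hv n (Icc_subset_Icc (by omega) hb hn)) _
  have hV : 0 < V := sum_pos hw (nonempty_Icc.2 (by omega))
  have hU₁ : 0 < U₁ := sum_pos (fun i hi => hu i (Icc_subset_Icc_right (by omega) hi))
    (nonempty_Icc.2 ha)
  have hU₂ : 0 < U₂ := sum_pos (fun i hi => hu i (Icc_subset_Icc_left (by omega) hi))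
    (nonempty_Icc.2 hb)
  obtain ⟨m, hm⟩ := exists_sum_mul_abs_rpow_mul_sub_eq_zero (Icc (-M) N)
    (by linarith : (-1 : ℝ) < q - 2) u y hu
  have henergy : ∑ n ∈ Icc (-M + 1) N, v n * |y n - y (n - 1)| ^ p = V := by
    rw [clampedPartialSum.sum_mul_abs_sub_pred_rpow hsub v (by linarith)]
    refine sum_congr rfl fun n hn => ?_
    rw [abs_of_pos (hw n hn)]
    exact mul_rpow_one_sub_div_sub_one_rpow hp.ne' (hv n (Icc_subset_Icc (by omega) hb hn))
  have hlevels : U₁ * |0 - m| ^ q + U₂ * |V - m| ^ q ≤ ∑ n ∈ Icc (-M) N, u n * |y n - m| ^ q :=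
    sum_mul_abs_sub_rpow_ge_of_two_levels ha hab hb (fun n hn => (hu n hn).le)
      (fun n hn => clampedPartialSum.of_le hn) (fun n hn => clampedPartialSum.of_ge hn)
  have hholder := sum_abs_le_weighted_Lp_mul univ hq ![U₁, U₂] ![0 - m, V - m]
    (by simp [Fin.forall_fin_two, hU₁, hU₂])
  simp only [Fin.sum_univ_two, Matrix.cons_val_zero, Matrix.cons_val_one] at hholder
  refine rpow_one_sub_mul_rpow_neg_le hV (by positivity) ?_
  calc V ≤ |0 - m| + |V - m| := by linarith [neg_le_abs (0 - m), le_abs_self (V - m)]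
    _ ≤ _ := hholder
    _ ≤ (∑ n ∈ Icc (-M) N, u n * |y n - m| ^ q) ^ (1 / q) *
          (U₁ ^ (1 - q / (q - 1)) + U₂ ^ (1 - q / (q - 1))) ^ (1 - 1 / q) := by
        gcongr
    _ ≤ A * V ^ (1 / p) * (U₁ ^ (1 - q / (q - 1)) + U₂ ^ (1 - q / (q - 1))) ^ (1 - 1 / q) := by
        rw [← henergy]; gcongr; exact hineq y m hm

theorem nn_lower_general (p q : ℝ) (hp : 1 < p) (hpq : p ≤ q)
    (M N : ℤ)
    (u v : ℤ → ℝ)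
    (hu : ∀ n ∈ Finset.Icc (-M) N, 0 < u n)
    (hv : ∀ n ∈ Finset.Icc (-M) N, 0 < v n)
    (B : ℝ)
    (hB : B = ⨆ (a : ℤ) (b : ℤ) (_ : -M ≤ a ∧ a < b ∧ b ≤ N),
      (∑ n ∈ Finset.Icc (a+1) b, v n ^ (1 - p/(p-1))) ^ (1 - 1/p) *
        ((∑ i ∈ Finset.Icc (-M) a, u i) ^ (1 - q/(q-1)) +
          (∑ j ∈ Finset.Icc b N, u j) ^ (1 - q/(q-1))) ^ (-(1 - 1/q)))
    (A : ℝ) (hA : 0 ≤ A)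
    (hineq : ∀ x : ℤ → ℝ, ∀ m : ℝ,
      (∑ n ∈ Finset.Icc (-M) N, u n * |x n - m| ^ (q-2) * (x n - m) = 0) →
      (∑ n ∈ Finset.Icc (-M) N, u n * |x n - m| ^ q) ^ (1/q) ≤
        A * (∑ n ∈ Finset.Icc (-M+1) N, v n * |x n - x (n-1)| ^ p) ^ (1/p)) :
    B ≤ A := by
  rw [hB]
  refine Real.iSup_le (fun a => Real.iSup_le (fun b => Real.iSup_le (fun hab => ?_) hA) hA) hA
  exact supremand_le_of_poincare_ineq hp (hp.trans_le hpq) hu hv hineq hab.1 hab.2.1 hab.2.2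

/-- Main Theorem, NN-case, lower estimate.  In the hypothesis `hineq`, `m` ranges over the
(unique) generalized mean of the sequence `x` with respect to the weights `u`, characterized by
`∑ u_n |x_n - m|^(q-2) (x_n - m) = 0`. -/
theorem nn_lower (p q : ℝ) (hp : 1 < p) (hpq : p ≤ q)
    (M N : ℤ) (hMN : -M ≤ N)
    (u v : ℤ → ℝ)
    (hu : ∀ n ∈ Finset.Icc (-M) N, 0 < u n)
    (hv : ∀ n ∈ Finset.Icc (-M) N, 0 < v n)
    (B : ℝ)
    (hB : B = ⨆ (a : ℤ) (b : ℤ) (_ : -M ≤ a ∧ a < b ∧ b ≤ N),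
      (∑ n ∈ Finset.Icc (a+1) b, v n ^ (1 - p/(p-1))) ^ (1 - 1/p) *
        ((∑ i ∈ Finset.Icc (-M) a, u i) ^ (1 - q/(q-1)) +
          (∑ j ∈ Finset.Icc b N, u j) ^ (1 - q/(q-1))) ^ (-(1 - 1/q)))
    (A : ℝ) (hA : 0 ≤ A)
    (hineq : ∀ x : ℤ → ℝ, ∀ m : ℝ,
      (∑ n ∈ Finset.Icc (-M) N, u n * |x n - m| ^ (q-2) * (x n - m) = 0) →
      (∑ n ∈ Finset.Icc (-M) N, u n * |x n - m| ^ q) ^ (1/q) ≤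
        A * (∑ n ∈ Finset.Icc (-M+1) N, v n * |x n - x (n-1)| ^ p) ^ (1/p)) :
    B ≤ A :=
  nn_lower_general p q hp hpq M N u v hu hv B hB A hA hineq
end

section
/- (Proposition 2.1, monotone rearrangement.) Let (x_n)_{n=−M}^{N+1} be a real sequence with x_{N+1} = 0, and define the nonincreasing sequence y_n = max_{n ≤ k ≤ N+1} |x_k| for −M ≤ n ≤ N+1 (so y_{N+1} = 0). Then (Σ_{n=−M}^{N} u_n |x_n|^q)^(1/q) · (Σ_{n=−M}^{N} v_n |y_n − y_{n+1}|^p)^(1/p) ≤ (Σ_{n=−M}^{N} u_n |y_n|^q)^(1/q) · (Σ_{n=−M}^{N} v_n |x_n − x_{n+1}|^p)^(1/p). -/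
/-- Proposition 2.1 (monotone rearrangement).  `y n` is the maximum of `|x k|` over
`n ≤ k ≤ N+1` (stated via `IsGreatest` on the image of the interval). -/
theorem monotone_rearrangement (p q : ℝ) (hp : 1 < p) (hpq : p ≤ q)
    (M N : ℤ) (hMN : -M ≤ N)
    (u v : ℤ → ℝ)
    (hu : ∀ n ∈ Finset.Icc (-M) N, 0 < u n)
    (hv : ∀ n ∈ Finset.Icc (-M) N, 0 < v n)
    (x y : ℤ → ℝ) (hx : x (N+1) = 0)
    (hy : ∀ n ∈ Finset.Icc (-M) (N+1),
      IsGreatest ((fun k => |x k|) '' Set.Icc n (N+1)) (y n)) :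
    (∑ n ∈ Finset.Icc (-M) N, u n * |x n| ^ q) ^ (1/q) *
        (∑ n ∈ Finset.Icc (-M) N, v n * |y n - y (n+1)| ^ p) ^ (1/p) ≤
      (∑ n ∈ Finset.Icc (-M) N, u n * |y n| ^ q) ^ (1/q) *
        (∑ n ∈ Finset.Icc (-M) N, v n * |x n - x (n+1)| ^ p) ^ (1/p) := by
  have hq1 : (1:ℝ) < q := lt_of_lt_of_le hp hpq
  have hq0 : (0:ℝ) < q := by linarith
  have hp0 : (0:ℝ) < p := by linarith
  -- termwise inequality for the first factor
  have hxy : ∀ n ∈ Finset.Icc (-M) N, |x n| ≤ y n := by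
    intro n hn
    rw [Finset.mem_Icc] at hn
    have hn1 : n ∈ Finset.Icc (-M) (N+1) := Finset.mem_Icc.2 ⟨hn.1, by linarith⟩
    exact (hy n hn1).2 (Set.mem_image_of_mem _ ⟨le_refl n, by linarith⟩)
  -- termwise inequality for the second factor
  have hd : ∀ n ∈ Finset.Icc (-M) N, |y n - y (n+1)| ≤ |x n - x (n+1)| := by
    intro n hn
    rw [Finset.mem_Icc] at hn
    have hn1 : n ∈ Finset.Icc (-M) (N+1) := Finset.mem_Icc.2 ⟨hn.1, by linarith⟩
    have hn2 : n+1 ∈ Finset.Icc (-M) (N+1) := Finset.mem_Icc.2 ⟨by linarith, by linarith⟩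
    have hx1 : |x (n+1)| ≤ y (n+1) :=
      (hy (n+1) hn2).2 (Set.mem_image_of_mem _ ⟨le_refl _, by linarith⟩)
    have hmono : y (n+1) ≤ y n := by
      obtain ⟨k, hk, hke⟩ := (hy (n+1) hn2).1
      rw [← hke]
      exact (hy n hn1).2 (Set.mem_image_of_mem _ ⟨by linarith [hk.1], hk.2⟩)
    have hcase : y n ≤ max (|x n|) (y (n+1)) := by
      obtain ⟨k, hk, hke⟩ := (hy n hn1).1
      rcases eq_or_lt_of_le hk.1 with h | h
      · rw [← hke, ← h]; exact le_max_left _ _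
      · have : |x k| ≤ y (n+1) :=
          (hy (n+1) hn2).2 (Set.mem_image_of_mem _ ⟨by omega, hk.2⟩)
        rw [← hke]
        exact le_trans this (le_max_right _ _)
    rw [abs_of_nonneg (sub_nonneg.2 hmono)]
    rcases le_total (|x n|) (y (n+1)) with h | h
    · have : y n - y (n+1) ≤ 0 := by
        have := le_trans hcase (max_le h (le_refl _)); linarith
      exact le_trans this (abs_nonneg _)
    · have h1 : y n - y (n+1) ≤ |x n| - |x (n+1)| := by
        have := le_trans hcase (max_le (le_refl _) h); linarith
      exact le_trans h1 (abs_sub_abs_le_abs_sub _ _)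
  -- nonnegativity of y on the relevant range
  have hy0 : ∀ n ∈ Finset.Icc (-M) N, 0 ≤ y n := fun n hn =>
    le_trans (abs_nonneg _) (hxy n hn)
  have sA : (∑ n ∈ Finset.Icc (-M) N, u n * |x n| ^ q) ≤
      ∑ n ∈ Finset.Icc (-M) N, u n * |y n| ^ q := by
    refine Finset.sum_le_sum fun n hn => ?_
    refine mul_le_mul_of_nonneg_left ?_ (hu n hn).le
    have := hxy n hn
    rw [abs_of_nonneg (hy0 n hn)]
    exact Real.rpow_le_rpow (abs_nonneg _) this hq0.le
  have sB : (∑ n ∈ Finset.Icc (-M) N, v n * |y n - y (n+1)| ^ p) ≤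
      ∑ n ∈ Finset.Icc (-M) N, v n * |x n - x (n+1)| ^ p := by
    refine Finset.sum_le_sum fun n hn => ?_
    exact mul_le_mul_of_nonneg_left
      (Real.rpow_le_rpow (abs_nonneg _) (hd n hn) hp0.le) (hv n hn).le
  have nA : (0:ℝ) ≤ ∑ n ∈ Finset.Icc (-M) N, u n * |x n| ^ q :=
    Finset.sum_nonneg fun n hn =>
      mul_nonneg (hu n hn).le (Real.rpow_nonneg (abs_nonneg _) _)
  have nB : (0:ℝ) ≤ ∑ n ∈ Finset.Icc (-M) N, v n * |y n - y (n+1)| ^ p :=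
    Finset.sum_nonneg fun n hn =>
      mul_nonneg (hv n hn).le (Real.rpow_nonneg (abs_nonneg _) _)
  have fA := Real.rpow_le_rpow nA sA (by positivity : (0:ℝ) ≤ 1/q)
  have fB := Real.rpow_le_rpow nB sB (by positivity : (0:ℝ) ≤ 1/p)
  exact mul_le_mul fA fB (Real.rpow_nonneg nB _) (Real.rpow_nonneg (le_trans nA sA) _)
end

section
/- (Proposition 3.1, DD-case, upper part.) Fix an integer θ with −M ≤ θ < N and a real γ ∈ [0, 1], and define u⁻ on [−M, θ] by u⁻_n = u_n for −M ≤ n ≤ θ−1, u⁻_θ = (1−γ)u_θ, and u⁺ on [θ+1, N+1] by u⁺_{θ+1} = γ·u_θ, u⁺_n = u_{n−1} for θ+2 ≤ n ≤ N+1. Suppose A⁻ ≥ 0 satisfies (Σ_{n=−M}^{θ} u⁻_n |x_n|^q)^(1/q) ≤ A⁻ · (Σ_{n=−M}^{θ} v_n |x_n − x_{n−1}|^p)^(1/p) for every real sequence (x_n)_{n=−M−1}^{θ} with x_{−M−1} = 0, and A⁺ ≥ 0 satisfies (Σ_{n=θ+1}^{N+1} u⁺_n |x_n|^q)^(1/q)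 ≤ A⁺ · (Σ_{n=θ+1}^{N} v_n |x_n − x_{n+1}|^p)^(1/p) for every real sequence (x_n)_{n=θ+1}^{N+1} with x_{N+1} = 0. Then for every real sequence (x_n)_{n=−M−1}^{N} with x_{−M−1} = x_N = 0 one has (Σ_{n=−M}^{N} u_n |x_n|^q)^(1/q) ≤ max(A⁻, A⁺) · (Σ_{n=−M}^{N} v_n |x_n − x_{n−1}|^p)^(1/p). -/
open Finset

lemma aux_icc_split (f : ℤ → ℝ) {a b c : ℤ} (h1 : a ≤ b) (h2 : b ≤ c) :
    ∑ n ∈ Icc a c, f n = ∑ n ∈ Icc a b, f n + ∑ n ∈ Icc (b+1) c, f n := by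
  have hun : Icc a c = Icc a b ∪ Icc (b+1) c := by ext n; simp; omega
  have hd : Disjoint (Icc a b) (Icc (b+1) c) := by
    simp only [Finset.disjoint_left, mem_Icc]; omega
  rw [hun, Finset.sum_union hd]

lemma aux_icc_top (f : ℤ → ℝ) {a b : ℤ} (h : a ≤ b) :
    ∑ n ∈ Icc a b, f n = ∑ n ∈ Icc a (b-1), f n + f b := by
  have : Icc a b = insert b (Icc a (b-1)) := by ext n; simp; omega
  rw [this, Finset.sum_insert (by simp)]; ring

lemma aux_icc_bot (f : ℤ → ℝ) {a b : ℤ} (h : a ≤ b) :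
    ∑ n ∈ Icc a b, f n = f a + ∑ n ∈ Icc (a+1) b, f n := by
  have : Icc a b = insert a (Icc (a+1) b) := by ext n; simp; omega
  rw [this, Finset.sum_insert (by simp)]

lemma aux_reindex (f : ℤ → ℝ) (a b : ℤ) :
    ∑ n ∈ Icc (a+1) (b+1), f n = ∑ n ∈ Icc a b, f (n+1) := by
  rw [← Finset.map_add_right_Icc a b 1, Finset.sum_map]
  rfl

lemma aux_add_rpow {a b r : ℝ} (ha : 0 ≤ a) (hb : 0 ≤ b) (hr : 1 ≤ r) :
    a ^ r + b ^ r ≤ (a + b) ^ r := by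
  lift a to NNReal using ha
  lift b to NNReal using hb
  have := NNReal.add_rpow_le_rpow_add a b hr
  exact_mod_cast this

/-- Proposition 3.1, DD-case, upper part. -/
theorem dd_split_upper (p q : ℝ) (hp : 1 < p) (hpq : p ≤ q)
    (M N : ℤ) (hMN : -M < N)
    (u v : ℤ → ℝ)
    (hu : ∀ n ∈ Finset.Icc (-M) N, 0 < u n)
    (hv : ∀ n ∈ Finset.Icc (-M) N, 0 < v n)
    (θ : ℤ) (hθ1 : -M ≤ θ) (hθ2 : θ < N)
    (γ : ℝ) (hγ : γ ∈ Set.Icc (0:ℝ) 1)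
    (uminus uplus : ℤ → ℝ)
    (hum : ∀ n ∈ Finset.Icc (-M) (θ-1), uminus n = u n)
    (humθ : uminus θ = (1 - γ) * u θ)
    (hupθ : uplus (θ+1) = γ * u θ)
    (hup : ∀ n ∈ Finset.Icc (θ+2) (N+1), uplus n = u (n-1))
    (Aneg Apos : ℝ) (hAneg : 0 ≤ Aneg) (hApos : 0 ≤ Apos)
    (hneg : ∀ x : ℤ → ℝ, x (-M-1) = 0 →
      (∑ n ∈ Finset.Icc (-M) θ, uminus n * |x n| ^ q) ^ (1/q) ≤
        Aneg * (∑ n ∈ Finset.Icc (-M) θ, v n * |x n - x (n-1)| ^ p) ^ (1/p))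
    (hpos : ∀ x : ℤ → ℝ, x (N+1) = 0 →
      (∑ n ∈ Finset.Icc (θ+1) (N+1), uplus n * |x n| ^ q) ^ (1/q) ≤
        Apos * (∑ n ∈ Finset.Icc (θ+1) N, v n * |x n - x (n+1)| ^ p) ^ (1/p)) :
    ∀ x : ℤ → ℝ, x (-M-1) = 0 → x N = 0 →
      (∑ n ∈ Finset.Icc (-M) N, u n * |x n| ^ q) ^ (1/q) ≤
        max Aneg Apos * (∑ n ∈ Finset.Icc (-M) N, v n * |x n - x (n-1)| ^ p) ^ (1/p) := by
  intro x hx0 hxN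
  obtain ⟨hγ0, hγ1⟩ := hγ
  have hp0 : (0:ℝ) < p := by linarith
  have hq1 : 1 < q := lt_of_lt_of_le hp hpq
  have hq0 : (0:ℝ) < q := by linarith
  set y : ℤ → ℝ := fun n => x (n-1) with hy
  set Sm := ∑ n ∈ Icc (-M) θ, uminus n * |x n| ^ q with hSm
  set Sp := ∑ n ∈ Icc (θ+1) (N+1), uplus n * |y n| ^ q with hSp
  set Tm := ∑ n ∈ Icc (-M) θ, v n * |x n - x (n-1)| ^ p with hTm
  set Tp := ∑ n ∈ Icc (θ+1) N, v n * |x n - x (n-1)| ^ p with hTp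
  -- nonnegativity
  have hSm0 : 0 ≤ Sm := by
    apply Finset.sum_nonneg
    intro n hn
    simp only [mem_Icc] at hn
    have hun : 0 ≤ uminus n := by
      rcases eq_or_lt_of_le hn.2 with h | h
      · rw [h, humθ]
        have := hu θ (by simp [mem_Icc]; omega)
        nlinarith
      · rw [hum n (by simp [mem_Icc]; omega)]
        exact (hu n (by simp [mem_Icc]; omega)).le
    exact mul_nonneg hun (Real.rpow_nonneg (abs_nonneg _) _)
  have hSp0 : 0 ≤ Sp := by
    apply Finset.sum_nonneg
    intro n hn
    simp only [mem_Icc] at hn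
    have hun : 0 ≤ uplus n := by
      rcases eq_or_lt_of_le hn.1 with h | h
      · rw [← h, hupθ]
        have := hu θ (by simp [mem_Icc]; omega)
        nlinarith
      · rw [hup n (by simp [mem_Icc]; omega)]
        exact (hu (n-1) (by simp [mem_Icc]; omega)).le
    exact mul_nonneg hun (Real.rpow_nonneg (abs_nonneg _) _)
  have hTm0 : 0 ≤ Tm := by
    apply Finset.sum_nonneg
    intro n hn
    simp only [mem_Icc] at hn
    exact mul_nonneg (hv n (by simp [mem_Icc]; omega)).le (Real.rpow_nonneg (abs_nonneg _) _)
  have hTp0 : 0 ≤ Tp := by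
    apply Finset.sum_nonneg
    intro n hn
    simp only [mem_Icc] at hn
    exact mul_nonneg (hv n (by simp [mem_Icc]; omega)).le (Real.rpow_nonneg (abs_nonneg _) _)
  -- two inequalities
  have h1 : Sm ^ (1/q) ≤ Aneg * Tm ^ (1/p) := hneg x hx0
  have h2 : Sp ^ (1/q) ≤ Apos * Tp ^ (1/p) := by
    have hyN : y (N+1) = 0 := by simp [hy, hxN]
    have := hpos y hyN
    have hT : ∑ n ∈ Icc (θ+1) N, v n * |y n - y (n+1)| ^ p = Tp := by
      apply Finset.sum_congr rfl
      intro n hn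
      have : y n - y (n+1) = x (n-1) - x n := by simp [hy]
      rw [this, abs_sub_comm]
    rwa [hT] at this
  -- sum decompositions
  have hLHS : ∑ n ∈ Icc (-M) N, u n * |x n| ^ q = Sm + Sp := by
    rw [aux_icc_split _ hθ1 hθ2.le, hSm, hSp,
      aux_icc_top (fun n => uminus n * |x n| ^ q) hθ1,
      aux_icc_bot (fun n => uplus n * |y n| ^ q) (by omega)]
    have e1 : ∑ n ∈ Icc (-M) (θ-1), uminus n * |x n| ^ q
        = ∑ n ∈ Icc (-M) (θ-1), u n * |x n| ^ q := by
      apply Finset.sum_congr rfl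
      intro n hn
      rw [hum n hn]
    have e2 : ∑ n ∈ Icc (θ+1+1) (N+1), uplus n * |y n| ^ q
        = ∑ n ∈ Icc (θ+1) N, u n * |x n| ^ q := by
      rw [aux_reindex (fun n => uplus n * |y n| ^ q) (θ+1) N]
      apply Finset.sum_congr rfl
      intro n hn
      simp only [mem_Icc] at hn
      have h3 : uplus (n+1) = u n := by
        have := hup (n+1) (by simp [mem_Icc]; omega)
        simpa using this
      have h4 : y (n+1) = x n := by simp [hy]
      rw [h3, h4]
    rw [e1, e2, humθ]
    have hy1 : y (θ+1) = x θ := by simp [hy]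
    rw [hy1, hupθ]
    have : ∑ n ∈ Icc (-M) θ, u n * |x n| ^ q
        = ∑ n ∈ Icc (-M) (θ-1), u n * |x n| ^ q + u θ * |x θ| ^ q :=
      aux_icc_top (fun n => u n * |x n| ^ q) hθ1
    rw [this]
    ring
  have hRHS : ∑ n ∈ Icc (-M) N, v n * |x n - x (n-1)| ^ p = Tm + Tp :=
    aux_icc_split _ hθ1 hθ2.le
  rw [hLHS, hRHS]
  -- final computation
  set A := max Aneg Apos with hA
  have hA0 : 0 ≤ A := le_trans hAneg (le_max_left _ _)
  have key : ∀ (S T B : ℝ), 0 ≤ S → 0 ≤ T → 0 ≤ B → B ≤ A →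
      S ^ (1/q) ≤ B * T ^ (1/p) → S ≤ A ^ q * T ^ (q/p) := by
    intro S T B hS hT hB hBA h
    have hS' : S = (S ^ (1/q)) ^ q := by
      rw [← Real.rpow_mul hS, one_div_mul_cancel (ne_of_gt hq0), Real.rpow_one]
    rw [hS']
    calc (S ^ (1/q)) ^ q ≤ (B * T ^ (1/p)) ^ q :=
          Real.rpow_le_rpow (Real.rpow_nonneg hS _) h hq0.le
      _ = B ^ q * T ^ (q/p) := by
          rw [Real.mul_rpow hB (Real.rpow_nonneg hT _), ← Real.rpow_mul hT]
          congr 1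
          field_simp
      _ ≤ A ^ q * T ^ (q/p) := by
          apply mul_le_mul_of_nonneg_right _ (Real.rpow_nonneg hT _)
          exact Real.rpow_le_rpow hB hBA hq0.le
  have k1 : Sm ≤ A ^ q * Tm ^ (q/p) := key Sm Tm Aneg hSm0 hTm0 hAneg (le_max_left _ _) h1
  have k2 : Sp ≤ A ^ q * Tp ^ (q/p) := key Sp Tp Apos hSp0 hTp0 hApos (le_max_right _ _) h2
  have hqp1 : 1 ≤ q / p := (one_le_div hp0).mpr hpq
  have k3 : Tm ^ (q/p) + Tp ^ (q/p) ≤ (Tm + Tp) ^ (q/p) := aux_add_rpow hTm0 hTp0 hqp1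
  have k4 : Sm + Sp ≤ A ^ q * (Tm + Tp) ^ (q/p) := by
    refine le_trans (add_le_add k1 k2) ?_
    rw [← mul_add]
    exact mul_le_mul_of_nonneg_left k3 (Real.rpow_nonneg hA0 q)
  calc (Sm + Sp) ^ (1/q) ≤ (A ^ q * (Tm + Tp) ^ (q/p)) ^ (1/q) :=
        Real.rpow_le_rpow (add_nonneg hSm0 hSp0) k4 (by positivity)
    _ = A * (Tm + Tp) ^ (1/p) := by
        rw [Real.mul_rpow (Real.rpow_nonneg hA0 _) (Real.rpow_nonneg (add_nonneg hTm0 hTp0) _),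
          ← Real.rpow_mul hA0, ← Real.rpow_mul (add_nonneg hTm0 hTp0),
          mul_one_div, div_self (ne_of_gt hq0), Real.rpow_one]
        congr 1
        rw [mul_one_div, div_div, mul_comm p q, ← div_div, div_self (ne_of_gt hq0)]
end

section
/- (Proposition 3.1, DD-case, lower part.) Fix an integer θ with −M ≤ θ < N and a real γ ∈ [0, 1], and define u⁻ on [−M, θ] by u⁻_n = u_n for −M ≤ n ≤ θ−1, u⁻_θ = (1−γ)u_θ, and u⁺ on [θ+1, N+1] by u⁺_{θ+1} = γ·u_θ, u⁺_n = u_{n−1} for θ+2 ≤ n ≤ N+1. Let A⁻ be the supremum over all not-identically-zero real sequences (x_n)_{n=−M−1}^{θ} with x_{−M−1} = 0 of (Σ_{n=−M}^{θ} u⁻_n |x_n|^q)^(1/q) / (Σ_{n=−M}^{θ} v_n |x_n − x_{n−1}|^p)^(1/p), and let A⁺ be the supremum over all not-identically-zero real sequences (x_n)_{n=θ+1}^{N+1} with x_{N+1} = 0 of (Σ_{n=θ+1}^{N+1} u⁺_n |x_n|^q)^(1/q) / (Σ_{n=θ+1}^{N} v_n |x_n − x_{n+1}|^p)^(1/p).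 If A ≥ 0 is a constant such that (Σ_{n=−M}^{N} u_n |x_n|^q)^(1/q) ≤ A · (Σ_{n=−M}^{N} v_n |x_n − x_{n−1}|^p)^(1/p) holds for every real sequence (x_n)_{n=−M−1}^{N} with x_{−M−1} = x_N = 0, then A ≥ 2^(1/q − 1/p) · min(A⁻, A⁺). -/
open Finset

private lemma sum_split_int {a t b : ℤ} (h1 : a ≤ t) (h2 : t ≤ b) (F : ℤ → ℝ) :
    ∑ n ∈ Finset.Icc a b, F n
      = ∑ n ∈ Finset.Icc a t, F n + ∑ n ∈ Finset.Icc (t+1) b, F n := by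
  rw [← Finset.sum_union (by
    rw [Finset.disjoint_left]
    intro x hx hx'
    simp only [Finset.mem_Icc] at hx hx'
    omega)]
  apply Finset.sum_congr _ (fun _ _ => rfl)
  ext x
  simp only [Finset.mem_Icc, Finset.mem_union]
  omega

private lemma sum_shift_int (a b : ℤ) (F : ℤ → ℝ) :
    ∑ n ∈ Finset.Icc a b, F (n+1) = ∑ n ∈ Finset.Icc (a+1) (b+1), F n := by
  rw [← Finset.map_add_right_Icc a b 1, Finset.sum_map]
  rfl

private lemma two_rpow_mul_add_rpow_le {X Y r : ℝ} (hX : 0 ≤ X) (hY : 0 ≤ Y) (hr : 1 ≤ r) :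
    2 ^ (1 - r) * (X + Y) ^ r ≤ X ^ r + Y ^ r := by
  have h := NNReal.rpow_add_le_mul_rpow_add_rpow X.toNNReal Y.toNNReal hr
  have h2 : (X + Y) ^ r ≤ 2 ^ (r - 1) * (X ^ r + Y ^ r) := by
    have h3 := NNReal.coe_le_coe.2 h
    push_cast [Real.coe_toNNReal X hX, Real.coe_toNNReal Y hY] at h3
    convert h3 using 3 <;> norm_num
  calc 2 ^ (1 - r) * (X + Y) ^ r
      ≤ 2 ^ (1 - r) * (2 ^ (r - 1) * (X ^ r + Y ^ r)) :=
        mul_le_mul_of_nonneg_left h2 (Real.rpow_nonneg (by norm_num) _)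
    _ = X ^ r + Y ^ r := by
        rw [← mul_assoc, ← Real.rpow_add (by norm_num)]
        norm_num

/-- Proposition 3.1, DD-case, lower part.  `Aneg` and `Apos` are the suprema of the
corresponding Rayleigh-type quotients over not-identically-zero sequences with the stated
one-sided Dirichlet boundary conditions. -/
theorem dd_split_lower (p q : ℝ) (hp : 1 < p) (hpq : p ≤ q)
    (M N : ℤ) (hMN : -M < N)
    (u v : ℤ → ℝ)
    (hu : ∀ n ∈ Finset.Icc (-M) N, 0 < u n)
    (hv : ∀ n ∈ Finset.Icc (-M) N, 0 < v n)
    (θ : ℤ) (hθ1 : -M ≤ θ) (hθ2 : θ < N)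
    (γ : ℝ) (hγ : γ ∈ Set.Icc (0:ℝ) 1)
    (uminus uplus : ℤ → ℝ)
    (hum : ∀ n ∈ Finset.Icc (-M) (θ-1), uminus n = u n)
    (humθ : uminus θ = (1 - γ) * u θ)
    (hupθ : uplus (θ+1) = γ * u θ)
    (hup : ∀ n ∈ Finset.Icc (θ+2) (N+1), uplus n = u (n-1))
    (Aneg Apos : ℝ)
    (hAneg : Aneg = ⨆ x : {x : ℤ → ℝ //
        x (-M-1) = 0 ∧ ¬ ∀ n ∈ Finset.Icc (-M-1) θ, x n = 0},
      (∑ n ∈ Finset.Icc (-M) θ, uminus n * |x.1 n| ^ q) ^ (1/q) /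
        (∑ n ∈ Finset.Icc (-M) θ, v n * |x.1 n - x.1 (n-1)| ^ p) ^ (1/p))
    (hApos : Apos = ⨆ x : {x : ℤ → ℝ //
        x (N+1) = 0 ∧ ¬ ∀ n ∈ Finset.Icc (θ+1) (N+1), x n = 0},
      (∑ n ∈ Finset.Icc (θ+1) (N+1), uplus n * |x.1 n| ^ q) ^ (1/q) /
        (∑ n ∈ Finset.Icc (θ+1) N, v n * |x.1 n - x.1 (n+1)| ^ p) ^ (1/p))
    (A : ℝ) (hA : 0 ≤ A)
    (hineq : ∀ x : ℤ → ℝ, x (-M-1) = 0 → x N = 0 →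
      (∑ n ∈ Finset.Icc (-M) N, u n * |x n| ^ q) ^ (1/q) ≤
        A * (∑ n ∈ Finset.Icc (-M) N, v n * |x n - x (n-1)| ^ p) ^ (1/p)) :
    (2:ℝ) ^ (1/q - 1/p) * min Aneg Apos ≤ A := by
  by_contra hcon
  push_neg at hcon
  have hp0 : (0:ℝ) < p := lt_trans one_pos hp
  have hq1 : (1:ℝ) < q := lt_of_lt_of_le hp hpq
  have hq0 : (0:ℝ) < q := lt_trans one_pos hq1
  have hp0' : p ≠ 0 := ne_of_gt hp0
  have hq0' : q ≠ 0 := ne_of_gt hq0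
  have hγ0 : 0 ≤ γ := hγ.1
  have hγ1 : γ ≤ 1 := hγ.2
  have huθ : 0 < u θ := hu θ (Finset.mem_Icc.2 ⟨hθ1, hθ2.le⟩)
  have hc : (0:ℝ) < 2 ^ (1/q - 1/p) := Real.rpow_pos_of_pos two_pos _
  set s : ℝ := A / 2 ^ (1/q - 1/p) with hs_def
  have hs : 0 ≤ s := div_nonneg hA hc.le
  have hcs : 2 ^ (1/q - 1/p) * s = A := by
    rw [hs_def]; field_simp
  have hsm : s < min Aneg Apos := by
    rw [hs_def, div_lt_iff₀ hc]
    linarith [mul_comm ((2:ℝ) ^ (1/q - 1/p)) (min Aneg Apos)]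
  -- nonempty index types
  haveI hne1 : Nonempty {x : ℤ → ℝ //
      x (-M-1) = 0 ∧ ¬ ∀ n ∈ Finset.Icc (-M-1) θ, x n = 0} := by
    refine ⟨⟨fun n => if n = θ then 1 else 0, ?_, ?_⟩⟩
    · simp only [if_neg (show ¬(-M-1 = θ) by omega)]
    · push_neg
      exact ⟨θ, Finset.mem_Icc.2 ⟨by omega, le_refl θ⟩, by simp⟩
  haveI hne2 : Nonempty {x : ℤ → ℝ //
      x (N+1) = 0 ∧ ¬ ∀ n ∈ Finset.Icc (θ+1) (N+1), x n = 0} := by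
    refine ⟨⟨fun n => if n = θ+1 then 1 else 0, ?_, ?_⟩⟩
    · simp only [if_neg (show ¬(N+1 = θ+1) by omega)]
    · push_neg
      exact ⟨θ+1, Finset.mem_Icc.2 ⟨le_refl _, by omega⟩, by simp⟩
  -- extract near-optimal test sequences
  have h1 : s < Aneg := lt_of_lt_of_le hsm (min_le_left _ _)
  rw [hAneg] at h1
  obtain ⟨xm, hxm⟩ := exists_lt_of_lt_ciSup h1
  have h2 : s < Apos := lt_of_lt_of_le hsm (min_le_right _ _)
  rw [hApos] at h2
  obtain ⟨xp, hxp⟩ := exists_lt_of_lt_ciSup h2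
  set f : ℤ → ℝ := xm.1 with hf_def
  set g : ℤ → ℝ := xp.1 with hg_def
  have hf0 : f (-M-1) = 0 := xm.2.1
  have hgN : g (N+1) = 0 := xp.2.1
  set Sm : ℝ := ∑ n ∈ Finset.Icc (-M) θ, uminus n * |f n| ^ q with hSm_def
  set Tm : ℝ := ∑ n ∈ Finset.Icc (-M) θ, v n * |f n - f (n-1)| ^ p with hTm_def
  set Sp : ℝ := ∑ n ∈ Finset.Icc (θ+1) (N+1), uplus n * |g n| ^ q with hSp_def
  set Tp : ℝ := ∑ n ∈ Finset.Icc (θ+1) N, v n * |g n - g (n+1)| ^ p with hTp_def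
  have hxm' : s < Sm ^ (1/q) / Tm ^ (1/p) := hxm
  have hxp' : s < Sp ^ (1/q) / Tp ^ (1/p) := hxp
  -- nonnegativity
  have hSm0 : 0 ≤ Sm := by
    apply Finset.sum_nonneg
    intro n hn
    rw [Finset.mem_Icc] at hn
    apply mul_nonneg _ (Real.rpow_nonneg (abs_nonneg _) _)
    rcases eq_or_ne n θ with rfl | hne
    · rw [humθ]; exact mul_nonneg (by linarith) huθ.le
    · rw [hum n (Finset.mem_Icc.2 ⟨hn.1, by omega⟩)]
      exact (hu n (Finset.mem_Icc.2 ⟨hn.1, by omega⟩)).le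
  have hSp0 : 0 ≤ Sp := by
    apply Finset.sum_nonneg
    intro n hn
    rw [Finset.mem_Icc] at hn
    apply mul_nonneg _ (Real.rpow_nonneg (abs_nonneg _) _)
    rcases eq_or_ne n (θ+1) with rfl | hne
    · rw [hupθ]; exact mul_nonneg hγ0 huθ.le
    · rw [hup n (Finset.mem_Icc.2 ⟨by omega, hn.2⟩)]
      exact (hu (n-1) (Finset.mem_Icc.2 ⟨by omega, by omega⟩)).le
  have hTm0 : 0 ≤ Tm := by
    apply Finset.sum_nonneg
    intro n hn
    rw [Finset.mem_Icc] at hn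
    exact mul_nonneg (hv n (Finset.mem_Icc.2 ⟨hn.1, by omega⟩)).le
      (Real.rpow_nonneg (abs_nonneg _) _)
  have hTp0 : 0 ≤ Tp := by
    apply Finset.sum_nonneg
    intro n hn
    rw [Finset.mem_Icc] at hn
    exact mul_nonneg (hv n (Finset.mem_Icc.2 ⟨by omega, hn.2⟩)).le
      (Real.rpow_nonneg (abs_nonneg _) _)
  -- positivity of denominators
  have hTm : 0 < Tm := by
    rcases hTm0.lt_or_eq with h | h
    · exact h
    · exfalso
      rw [← h, Real.zero_rpow (one_div_ne_zero hp0'), div_zero] at hxm'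
      linarith
  have hTp : 0 < Tp := by
    rcases hTp0.lt_or_eq with h | h
    · exact h
    · exfalso
      rw [← h, Real.zero_rpow (one_div_ne_zero hp0'), div_zero] at hxp'
      linarith
  -- key strict inequalities
  have hSm_lt : s ^ q * Tm ^ (q/p) < Sm := by
    have hTmp : 0 < Tm ^ (1/p) := Real.rpow_pos_of_pos hTm _
    have l1 : s * Tm ^ (1/p) < Sm ^ (1/q) := (lt_div_iff₀ hTmp).1 hxm'
    have l2 := Real.rpow_lt_rpow (mul_nonneg hs hTmp.le) l1 hq0
    rw [Real.mul_rpow hs hTmp.le, ← Real.rpow_mul hTm0] at l2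
    rw [← Real.rpow_mul hSm0, one_div_mul_cancel hq0', Real.rpow_one] at l2
    rw [show 1/p * q = q/p by ring] at l2
    exact l2
  have hSp_lt : s ^ q * Tp ^ (q/p) < Sp := by
    have hTpp : 0 < Tp ^ (1/p) := Real.rpow_pos_of_pos hTp _
    have l1 : s * Tp ^ (1/p) < Sp ^ (1/q) := (lt_div_iff₀ hTpp).1 hxp'
    have l2 := Real.rpow_lt_rpow (mul_nonneg hs hTpp.le) l1 hq0
    rw [Real.mul_rpow hs hTpp.le, ← Real.rpow_mul hTp0] at l2
    rw [← Real.rpow_mul hSp0, one_div_mul_cancel hq0', Real.rpow_one] at l2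
    rw [show 1/p * q = q/p by ring] at l2
    exact l2
  -- choose scaling factors
  obtain ⟨β, α, hjunc, hBA⟩ : ∃ β α : ℝ, β * f θ = α * g (θ+1) ∧ (β ≠ 0 ∨ α ≠ 0) := by
    by_cases h : f θ = 0 ∧ g (θ+1) = 0
    · exact ⟨1, 1, by rw [h.1, h.2], Or.inl one_ne_zero⟩
    · refine ⟨g (θ+1), f θ, mul_comm _ _, ?_⟩
      rw [not_and_or] at h
      tauto
  have hB0 : 0 ≤ |β| := abs_nonneg _
  have hC0 : 0 ≤ |α| := abs_nonneg _
  -- glued sequence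
  set y : ℤ → ℝ := fun n => if n ≤ θ then β * f n else α * g (n+1) with hy_def
  have hy0 : y (-M-1) = 0 := by
    rw [hy_def]
    simp only [if_pos (show -M-1 ≤ θ by omega)]
    rw [hf0, mul_zero]
  have hyN : y N = 0 := by
    rw [hy_def]
    simp only [if_neg (show ¬ N ≤ θ by omega)]
    rw [hgN, mul_zero]
  -- numerator identity
  have hcross : |β| ^ q * (γ * u θ * |f θ| ^ q) = |α| ^ q * (γ * u θ * |g (θ+1)| ^ q) := by
    have e1 : |β * f θ| = |α * g (θ+1)| := by rw [hjunc]
    have e2 : |β| ^ q * |f θ| ^ q = |α| ^ q * |g (θ+1)| ^ q := by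
      rw [← Real.mul_rpow (abs_nonneg _) (abs_nonneg _),
        ← Real.mul_rpow (abs_nonneg _) (abs_nonneg _),  
        ← abs_mul, ← abs_mul, e1]
    linear_combination (γ * u θ) * e2
  have hpart1 : ∑ n ∈ Finset.Icc (-M) θ, u n * |y n| ^ q
      = |β| ^ q * Sm + |β| ^ q * (γ * u θ * |f θ| ^ q) := by
    have e1 : ∀ n ∈ Finset.Icc (-M) θ, u n * |y n| ^ q
        = |β| ^ q * (uminus n * |f n| ^ q)
          + (if n = θ then |β| ^ q * (γ * u θ * |f θ| ^ q) else 0) := by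
      intro n hn
      rw [Finset.mem_Icc] at hn
      rw [hy_def]
      simp only [if_pos hn.2]
      rw [abs_mul, Real.mul_rpow (abs_nonneg _) (abs_nonneg _)]
      rcases eq_or_ne n θ with rfl | hne
      · rw [if_pos rfl, humθ]; ring
      · rw [if_neg hne, hum n (Finset.mem_Icc.2 ⟨hn.1, by omega⟩)]; ring
    rw [Finset.sum_congr rfl e1, Finset.sum_add_distrib,
      Finset.sum_ite_eq' (Finset.Icc (-M) θ) θ,
      if_pos (Finset.mem_Icc.2 ⟨hθ1, le_refl θ⟩), hSm_def, Finset.mul_sum]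
  have hpart2 : ∑ n ∈ Finset.Icc (θ+1) N, u n * |y n| ^ q
      = |α| ^ q * Sp - |α| ^ q * (γ * u θ * |g (θ+1)| ^ q) := by
    have e1 : ∀ n ∈ Finset.Icc (θ+1) N, u n * |y n| ^ q
        = |α| ^ q * (u n * |g (n+1)| ^ q) := by
      intro n hn
      rw [Finset.mem_Icc] at hn
      rw [hy_def]
      simp only [if_neg (show ¬ n ≤ θ by omega)]
      rw [abs_mul, Real.mul_rpow (abs_nonneg _) (abs_nonneg _)]
      ring
    rw [Finset.sum_congr rfl e1, ← Finset.mul_sum]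
    have e2 : ∑ n ∈ Finset.Icc (θ+1) N, u n * |g (n+1)| ^ q
        = ∑ n ∈ Finset.Icc (θ+2) (N+1), uplus n * |g n| ^ q := by
      have e3 := sum_shift_int (θ+1) N (fun m => u (m-1) * |g m| ^ q)
      simp only [add_sub_cancel_right] at e3
      rw [show θ+1+1 = θ+2 by ring] at e3
      rw [e3]
      refine Finset.sum_congr rfl (fun n hn => ?_)
      rw [Finset.mem_Icc] at hn
      rw [hup n (Finset.mem_Icc.2 ⟨hn.1, hn.2⟩)]
    have e4 : Sp = γ * u θ * |g (θ+1)| ^ q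
        + ∑ n ∈ Finset.Icc (θ+2) (N+1), uplus n * |g n| ^ q := by
      rw [hSp_def, sum_split_int (le_refl (θ+1)) (by omega)]
      rw [Finset.Icc_self, Finset.sum_singleton, hupθ]
      rw [show θ+1+1 = θ+2 by ring]
    rw [e2, e4]
    ring
  have hyS : ∑ n ∈ Finset.Icc (-M) N, u n * |y n| ^ q = |β| ^ q * Sm + |α| ^ q * Sp := by
    rw [sum_split_int hθ1 hθ2.le, hpart1, hpart2]
    linarith [hcross]
  -- denominator identity
  have hyT : ∑ n ∈ Finset.Icc (-M) N, v n * |y n - y (n-1)| ^ p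
      = |β| ^ p * Tm + |α| ^ p * Tp := by
    rw [sum_split_int hθ1 hθ2.le]
    have e1 : ∀ n ∈ Finset.Icc (-M) θ, v n * |y n - y (n-1)| ^ p
        = |β| ^ p * (v n * |f n - f (n-1)| ^ p) := by
      intro n hn
      rw [Finset.mem_Icc] at hn
      rw [hy_def]
      simp only [if_pos hn.2, if_pos (show n-1 ≤ θ by omega)]
      rw [← mul_sub, abs_mul, Real.mul_rpow (abs_nonneg _) (abs_nonneg _)]
      ring
    have e2 : ∀ n ∈ Finset.Icc (θ+1) N, v n * |y n - y (n-1)| ^ p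
        = |α| ^ p * (v n * |g n - g (n+1)| ^ p) := by
      intro n hn
      rw [Finset.mem_Icc] at hn
      have hyn : y n = α * g (n+1) := by
        rw [hy_def]; simp only [if_neg (show ¬ n ≤ θ by omega)]
      have hyn1 : y (n-1) = α * g n := by
        rw [hy_def]
        rcases eq_or_ne n (θ+1) with rfl | hne
        · simp only [if_pos (show θ+1-1 ≤ θ by omega)]
          rw [show θ+1-1 = θ by ring, hjunc]
        · simp only [if_neg (show ¬ n-1 ≤ θ by omega)]
          rw [show n-1+1 = n by ring]
      rw [hyn, hyn1, ← mul_sub, abs_mul,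
        show |g (n+1) - g n| = |g n - g (n+1)| from abs_sub_comm _ _,
        Real.mul_rpow (abs_nonneg _) (abs_nonneg _)]
      ring
    rw [Finset.sum_congr rfl e1, Finset.sum_congr rfl e2, ← Finset.mul_sum, ← Finset.mul_sum]
  -- apply the main inequality to y
  have hmain := hineq y hy0 hyN
  rw [hyS, hyT] at hmain
  -- combine
  have hr : 1 ≤ q/p := (one_le_div hp0).2 hpq
  have hW0 : 0 ≤ |β| ^ p * Tm + |α| ^ p * Tp :=
    add_nonneg (mul_nonneg (Real.rpow_nonneg hB0 _) hTm0)
      (mul_nonneg (Real.rpow_nonneg hC0 _) hTp0)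
  have hXr : (|β| ^ p * Tm) ^ (q/p) = |β| ^ q * Tm ^ (q/p) := by
    rw [Real.mul_rpow (Real.rpow_nonneg hB0 _) hTm0, ← Real.rpow_mul hB0,
      show p * (q/p) = q by field_simp]
  have hYr : (|α| ^ p * Tp) ^ (q/p) = |α| ^ q * Tp ^ (q/p) := by
    rw [Real.mul_rpow (Real.rpow_nonneg hC0 _) hTp0, ← Real.rpow_mul hC0,
      show p * (q/p) = q by field_simp]
  have strict : s ^ q * ((|β| ^ p * Tm) ^ (q/p) + (|α| ^ p * Tp) ^ (q/p))
      < |β| ^ q * Sm + |α| ^ q * Sp := by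
    rw [hXr, hYr, mul_add]
    rcases hBA with h | h
    · have hBq : 0 < |β| ^ q := Real.rpow_pos_of_pos (abs_pos.2 h) _
      have l1 : s ^ q * (|β| ^ q * Tm ^ (q/p)) < |β| ^ q * Sm := by
        rw [show s ^ q * (|β| ^ q * Tm ^ (q/p)) = |β| ^ q * (s ^ q * Tm ^ (q/p)) by ring]
        exact mul_lt_mul_of_pos_left hSm_lt hBq
      have l2 : s ^ q * (|α| ^ q * Tp ^ (q/p)) ≤ |α| ^ q * Sp := by
        rw [show s ^ q * (|α| ^ q * Tp ^ (q/p)) = |α| ^ q * (s ^ q * Tp ^ (q/p)) by ring]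
        exact mul_le_mul_of_nonneg_left hSp_lt.le (Real.rpow_nonneg hC0 _)
      linarith
    · have hCq : 0 < |α| ^ q := Real.rpow_pos_of_pos (abs_pos.2 h) _
      have l1 : s ^ q * (|α| ^ q * Tp ^ (q/p)) < |α| ^ q * Sp := by
        rw [show s ^ q * (|α| ^ q * Tp ^ (q/p)) = |α| ^ q * (s ^ q * Tp ^ (q/p)) by ring]
        exact mul_lt_mul_of_pos_left hSp_lt hCq
      have l2 : s ^ q * (|β| ^ q * Tm ^ (q/p)) ≤ |β| ^ q * Sm := by
        rw [show s ^ q * (|β| ^ q * Tm ^ (q/p)) = |β| ^ q * (s ^ q * Tm ^ (q/p)) by ring]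
        exact mul_le_mul_of_nonneg_left hSm_lt.le (Real.rpow_nonneg hB0 _)
      linarith
  have key1 : s ^ q * (2 ^ (1 - q/p) * (|β| ^ p * Tm + |α| ^ p * Tp) ^ (q/p))
      < |β| ^ q * Sm + |α| ^ q * Sp := by
    refine lt_of_le_of_lt ?_ strict
    exact mul_le_mul_of_nonneg_left
      (two_rpow_mul_add_rpow_le (mul_nonneg (Real.rpow_nonneg hB0 _) hTm0)
        (mul_nonneg (Real.rpow_nonneg hC0 _) hTp0) hr)
      (Real.rpow_nonneg hs _)
  have key2 : (s ^ q * (2 ^ (1 - q/p) * (|β| ^ p * Tm + |α| ^ p * Tp) ^ (q/p))) ^ (1/q)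
      < (|β| ^ q * Sm + |α| ^ q * Sp) ^ (1/q) := by
    apply Real.rpow_lt_rpow _ key1 (by positivity)
    exact mul_nonneg (Real.rpow_nonneg hs _)
      (mul_nonneg (Real.rpow_nonneg (by norm_num) _) (Real.rpow_nonneg hW0 _))
  have keyeq : (s ^ q * (2 ^ (1 - q/p) * (|β| ^ p * Tm + |α| ^ p * Tp) ^ (q/p))) ^ (1/q)
      = A * (|β| ^ p * Tm + |α| ^ p * Tp) ^ (1/p) := by
    rw [Real.mul_rpow (Real.rpow_nonneg hs _)
        (mul_nonneg (Real.rpow_nonneg (by norm_num) _) (Real.rpow_nonneg hW0 _)),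
      Real.mul_rpow (Real.rpow_nonneg (by norm_num) _) (Real.rpow_nonneg hW0 _),
      ← Real.rpow_mul hs, ← Real.rpow_mul (by norm_num : (0:ℝ) ≤ 2), ← Real.rpow_mul hW0,
      show q * (1/q) = 1 by field_simp,
      show (1 - q/p) * (1/q) = 1/q - 1/p by
        rw [sub_mul, one_mul, div_mul_div_comm, mul_one, mul_comm p q, ← div_div, div_self hq0'],
      show (q/p) * (1/q) = 1/p by
        rw [div_mul_div_comm, mul_one, mul_comm p q, ← div_div, div_self hq0'],
      Real.rpow_one, ← hcs]
    ring
  rw [keyeq] at key2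
  linarith
end

section
/- (Proposition 4.1, existence and uniqueness of the generalized mean.) Let q > 1 be real, let u_{−M}, …, u_N be strictly positive reals and let x_{−M}, …, x_N be reals. Then there exists a unique real number m such that Σ_{n=−M}^{N} u_n |x_n − m|^(q−2) (x_n − m) = 0, where |t|^(q−2)·t is understood as |t|^(q−1)·sgn(t) (equal to 0 when t = 0). -/
/-!
The map `φ t = |t| ^ (q - 2) * t` is odd, continuous and strictly increasing, and vanishes at `0`.
Hence `m ↦ ∑ uₙ φ(xₙ - m)` is continuous and strictly decreasing; it is `≥ 0` at `m = min xₙ`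
and `≤ 0` at `m = max xₙ`, so it has exactly one zero.
-/

open Finset

/-- `signedRpow p t = sgn t * |t| ^ p`. -/
noncomputable def signedRpow (p t : ℝ) : ℝ := |t| ^ (p - 1) * t

section signedRpow

variable {p : ℝ}

@[simp]
lemma signedRpow_zero (p : ℝ) : signedRpow p 0 = 0 := by
  simp [signedRpow]

lemma signedRpow_neg (t : ℝ) : signedRpow p (-t) = -signedRpow p t := by
  simp [signedRpow]

lemma signedRpow_of_nonneg (hp : p ≠ 0) {t : ℝ} (ht : 0 ≤ t) : signedRpow p t = t ^ p := by
  rcases ht.eq_or_lt with rfl | ht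
  · simp [Real.zero_rpow hp]
  · rw [signedRpow, abs_of_pos ht, ← Real.rpow_add_one ht.ne', sub_add_cancel]

lemma signedRpow_eq_max_rpow_sub (hp : p ≠ 0) (t : ℝ) :
    signedRpow p t = max t 0 ^ p - max (-t) 0 ^ p := by
  rcases le_total 0 t with ht | ht
  · rw [signedRpow_of_nonneg hp ht, max_eq_left ht, max_eq_right (neg_nonpos.2 ht),
      Real.zero_rpow hp, sub_zero]
  · rw [← neg_neg t, signedRpow_neg, signedRpow_of_nonneg hp (neg_nonneg.2 ht), neg_neg,
      max_eq_right ht, max_eq_left (neg_nonneg.2 ht), Real.zero_rpow hp, zero_sub]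

lemma strictMono_signedRpow (hp : 0 < p) : StrictMono (signedRpow p) :=
  strictMono_of_odd_strictMonoOn_nonneg signedRpow_neg <|
    (Real.strictMonoOn_rpow_Ici_of_exponent_pos hp).congr fun _ ht =>
      (signedRpow_of_nonneg hp.ne' ht).symm

lemma continuous_signedRpow (hp : 0 < p) : Continuous (signedRpow p) := by
  rw [funext (signedRpow_eq_max_rpow_sub hp.ne')]
  have h := Real.continuous_rpow_const hp.le
  fun_prop

end signedRpow

section WeightedZero

variable {ι : Type*} {s : Finset ι} {u : ι → ℝ} {φ : ℝ → ℝ}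

lemma strictAnti_sum_mul_apply_sub (hs : s.Nonempty) (hu : ∀ i ∈ s, 0 < u i) (x : ι → ℝ)
    (hφ : StrictMono φ) : StrictAnti fun m => ∑ i ∈ s, u i * φ (x i - m) :=
  fun _ _ hab => sum_lt_sum_of_nonempty hs fun i hi =>
    mul_lt_mul_of_pos_left (hφ (sub_lt_sub_left hab _)) (hu i hi)

theorem existsUnique_sum_mul_apply_sub_eq_zero (hs : s.Nonempty) (hu : ∀ i ∈ s, 0 < u i)
    (x : ι → ℝ) (hφ : StrictMono φ) (hφc : Continuous φ) (hφ0 : φ 0 = 0) :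
    ∃! m, ∑ i ∈ s, u i * φ (x i - m) = 0 := by
  set f := fun m => ∑ i ∈ s, u i * φ (x i - m)
  have hf : Continuous f := by fun_prop
  have hf_inf : 0 ≤ f (s.inf' hs x) := sum_nonneg fun i hi =>
    mul_nonneg (hu i hi).le <| hφ0 ▸ hφ.monotone (sub_nonneg.2 (inf'_le x hi))
  have hf_sup : f (s.sup' hs x) ≤ 0 := sum_nonpos fun i hi =>
    mul_nonpos_of_nonneg_of_nonpos (hu i hi).le <|
      hφ0 ▸ hφ.monotone (sub_nonpos.2 (le_sup' x hi))
  have ⟨j, hj⟩ := hs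
  obtain ⟨m, -, hm⟩ := intermediate_value_Icc' ((inf'_le x hj).trans (le_sup' x hj))
    hf.continuousOn ⟨hf_sup, hf_inf⟩
  exact ⟨m, hm, fun _ hm' =>
    (strictAnti_sum_mul_apply_sub hs hu x hφ).injective (hm'.trans hm.symm)⟩

end WeightedZero

/-- Proposition 4.1 (existence and uniqueness of the generalized mean).  Here
`|t|^(q-2) * t` (with `rpow`) equals `|t|^(q-1) * sgn t`, and equals `0` when `t = 0`. -/
theorem generalized_mean_exists_unique (q : ℝ) (hq : 1 < q)
    (M N : ℤ) (hMN : -M ≤ N)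
    (u : ℤ → ℝ) (hu : ∀ n ∈ Finset.Icc (-M) N, 0 < u n)
    (x : ℤ → ℝ) :
    ∃! m : ℝ, ∑ n ∈ Finset.Icc (-M) N, u n * |x n - m| ^ (q-2) * (x n - m) = 0 := by
  have hp : 0 < q - 1 := sub_pos.2 hq
  have h := existsUnique_sum_mul_apply_sub_eq_zero (nonempty_Icc.2 hMN) hu x
    (strictMono_signedRpow hp) (continuous_signedRpow hp) (signedRpow_zero _)
  simpa only [signedRpow, sub_sub, one_add_one_eq_two, mul_assoc] using h
end

section
/- (Lemma 4.1, splitting identities for the NN-case.) Fix an integer θ with −M < θ ≤ N and a real γ ∈ (0, 1). Define u⁻_n = u_{n−1} for −M+1 ≤ n ≤ θ and u⁺_n = u_n for θ ≤ n ≤ N; define v⁻_n = v_n for −M+1 ≤ n ≤ θ−1 and v⁻_θ = γ^(1−p)·v_θ; define v⁺_θ = (1−γ)^(1−p)·v_θ and v⁺_n = v_n for θ+1 ≤ n ≤ N. Given a real sequence (x_n)_{n=−M}^{N}, define x⁻_n = x_{n−1} for −M+1 ≤ n ≤ θ and x⁻_{θ+1} = (1−γ)x_{θ−1} + γx_θ,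 and define x⁺_n = x_n for θ ≤ n ≤ N and x⁺_{θ−1} = (1−γ)x_{θ−1} + γx_θ. Then for every real constant m: (i) Σ_{n=−M}^{N} u_n |x_n − m|^q = Σ_{n=−M+1}^{θ} u⁻_n |x⁻_n − m|^q + Σ_{n=θ}^{N} u⁺_n |x⁺_n − m|^q; and (ii) Σ_{n=−M+1}^{N} v_n |x_n − x_{n−1}|^p = Σ_{n=−M+1}^{θ} v⁻_n |x⁻_n − x⁻_{n+1}|^p + Σ_{n=θ}^{N} v⁺_n |x⁺_n − x⁺_{n−1}|^p. -/
private lemma sum_Icc_split (f : ℤ → ℝ) (a b c : ℤ) (h1 : a ≤ b + 1) (h2 : b ≤ c) :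
    ∑ n ∈ Finset.Icc a c, f n =
      ∑ n ∈ Finset.Icc a b, f n + ∑ n ∈ Finset.Icc (b+1) c, f n := by
  rw [← Finset.sum_union]
  · congr 1
    ext n
    simp only [Finset.mem_union, Finset.mem_Icc]
    omega
  · rw [Finset.disjoint_left]
    intro n hn hn'
    simp only [Finset.mem_Icc] at hn hn'
    omega

/-- Lemma 4.1 (splitting identities for the NN-case). -/
theorem nn_splitting (p q : ℝ) (hp : 1 < p) (hpq : p ≤ q)
    (M N : ℤ) (hMN : -M < N)
    (u v : ℤ → ℝ)
    (hu : ∀ n ∈ Finset.Icc (-M) N, 0 < u n)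
    (hv : ∀ n ∈ Finset.Icc (-M) N, 0 < v n)
    (θ : ℤ) (hθ1 : -M < θ) (hθ2 : θ ≤ N)
    (γ : ℝ) (hγ : γ ∈ Set.Ioo (0:ℝ) 1)
    (uminus uplus vminus vplus : ℤ → ℝ)
    (hum : ∀ n ∈ Finset.Icc (-M+1) θ, uminus n = u (n-1))
    (hup : ∀ n ∈ Finset.Icc θ N, uplus n = u n)
    (hvm : ∀ n ∈ Finset.Icc (-M+1) (θ-1), vminus n = v n)
    (hvmθ : vminus θ = γ ^ (1-p) * v θ)
    (hvpθ : vplus θ = (1-γ) ^ (1-p) * v θ)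
    (hvp : ∀ n ∈ Finset.Icc (θ+1) N, vplus n = v n)
    (x xminus xplus : ℤ → ℝ)
    (hxm : ∀ n ∈ Finset.Icc (-M+1) θ, xminus n = x (n-1))
    (hxmθ : xminus (θ+1) = (1-γ) * x (θ-1) + γ * x θ)
    (hxp : ∀ n ∈ Finset.Icc θ N, xplus n = x n)
    (hxpθ : xplus (θ-1) = (1-γ) * x (θ-1) + γ * x θ) :
    ∀ m : ℝ,
    (∑ n ∈ Finset.Icc (-M) N, u n * |x n - m| ^ q =
      ∑ n ∈ Finset.Icc (-M+1) θ, uminus n * |xminus n - m| ^ q +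
        ∑ n ∈ Finset.Icc θ N, uplus n * |xplus n - m| ^ q) ∧
    (∑ n ∈ Finset.Icc (-M+1) N, v n * |x n - x (n-1)| ^ p =
      ∑ n ∈ Finset.Icc (-M+1) θ, vminus n * |xminus n - xminus (n+1)| ^ p +
        ∑ n ∈ Finset.Icc θ N, vplus n * |xplus n - xplus (n-1)| ^ p) := by
  obtain ⟨hγ0, hγ1⟩ := hγ
  have hγ1' : (0:ℝ) < 1 - γ := by linarith
  intro m
  have hIoc : Finset.Ioc θ N = Finset.Icc (θ+1) N := by
    ext n; simp only [Finset.mem_Ioc, Finset.mem_Icc]; omega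
  constructor
  · -- part (i)
    have hsplit := sum_Icc_split (fun n => u n * |x n - m| ^ q) (-M) (θ-1) N
      (by omega) (by omega)
    have hθ' : θ - 1 + 1 = θ := by omega
    rw [hθ'] at hsplit
    rw [hsplit]
    congr 1
    · -- shifted sum
      refine (Finset.sum_nbij' (fun n => n - 1) (fun n => n + 1) ?_ ?_ ?_ ?_ ?_).symm
      · intro a ha; simp only [Finset.mem_Icc] at ha ⊢; omega
      · intro a ha; simp only [Finset.mem_Icc] at ha ⊢; omega
      · intro a _; omega
      · intro a _; omega
      · intro a ha; rw [hum a ha, hxm a ha]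
    · refine Finset.sum_congr rfl fun n hn => ?_
      rw [hup n hn, hxp n hn]
  · -- part (ii)
    have hθ' : θ - 1 + 1 = θ := by omega
    have A := |x θ - x (θ-1)|
    -- LHS split
    have hL := sum_Icc_split (fun n => v n * |x n - x (n-1)| ^ p) (-M+1) (θ-1) N
      (by omega) (by omega)
    rw [hθ'] at hL
    have hL2 : ∑ n ∈ Finset.Icc θ N, v n * |x n - x (n-1)| ^ p
        = v θ * |x θ - x (θ-1)| ^ p
          + ∑ n ∈ Finset.Icc (θ+1) N, v n * |x n - x (n-1)| ^ p := by
      rw [Finset.Icc_eq_cons_Ioc hθ2, Finset.sum_cons, hIoc]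
    -- RHS minus sum split
    have hRm := sum_Icc_split (fun n => vminus n * |xminus n - xminus (n+1)| ^ p)
      (-M+1) (θ-1) θ (by omega) (by omega)
    rw [hθ'] at hRm
    simp only [Finset.Icc_self, Finset.sum_singleton] at hRm
    -- RHS plus sum split
    have hRp : ∑ n ∈ Finset.Icc θ N, vplus n * |xplus n - xplus (n-1)| ^ p
        = vplus θ * |xplus θ - xplus (θ-1)| ^ p
          + ∑ n ∈ Finset.Icc (θ+1) N, vplus n * |xplus n - xplus (n-1)| ^ p := by
      rw [Finset.Icc_eq_cons_Ioc hθ2, Finset.sum_cons, hIoc]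
    rw [hL, hL2, hRm, hRp]
    -- identify interior sums
    have hm1 : ∑ n ∈ Finset.Icc (-M+1) (θ-1), vminus n * |xminus n - xminus (n+1)| ^ p
        = ∑ n ∈ Finset.Icc (-M+1) (θ-1), v n * |x n - x (n-1)| ^ p := by
      refine Finset.sum_congr rfl fun n hn => ?_
      simp only [Finset.mem_Icc] at hn
      rw [hvm n (by simp only [Finset.mem_Icc]; omega),
        hxm n (by simp only [Finset.mem_Icc]; omega),
        hxm (n+1) (by simp only [Finset.mem_Icc]; omega)]
      rw [abs_sub_comm]
      norm_num
    have hp1 : ∑ n ∈ Finset.Icc (θ+1) N, vplus n * |xplus n - xplus (n-1)| ^ p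
        = ∑ n ∈ Finset.Icc (θ+1) N, v n * |x n - x (n-1)| ^ p := by
      refine Finset.sum_congr rfl fun n hn => ?_
      simp only [Finset.mem_Icc] at hn
      rw [hvp n (by simp only [Finset.mem_Icc]; omega),
        hxp n (by simp only [Finset.mem_Icc]; omega),
        hxp (n-1) (by simp only [Finset.mem_Icc]; omega)]
    rw [hm1, hp1]
    -- boundary terms
    have hxmθ' : xminus θ = x (θ-1) := hxm θ (by simp only [Finset.mem_Icc]; omega)
    have hxpθ' : xplus θ = x θ := hxp θ (by simp only [Finset.mem_Icc]; omega)
    have hbm : vminus θ * |xminus θ - xminus (θ+1)| ^ p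
        = γ * (v θ * |x θ - x (θ-1)| ^ p) := by
      rw [hvmθ, hxmθ', hxmθ]
      have h1 : x (θ-1) - ((1-γ) * x (θ-1) + γ * x θ) = γ * (x (θ-1) - x θ) := by ring
      rw [h1, abs_mul, abs_of_pos hγ0, Real.mul_rpow hγ0.le (abs_nonneg _),
        abs_sub_comm]
      rw [show γ ^ (1-p) * v θ * (γ ^ p * |x θ - x (θ-1)| ^ p)
          = γ ^ (1-p) * γ ^ p * (v θ * |x θ - x (θ-1)| ^ p) by ring,
        ← Real.rpow_add hγ0, sub_add_cancel, Real.rpow_one]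
    have hbp : vplus θ * |xplus θ - xplus (θ-1)| ^ p
        = (1-γ) * (v θ * |x θ - x (θ-1)| ^ p) := by
      rw [hvpθ, hxpθ', hxpθ]
      have h1 : x θ - ((1-γ) * x (θ-1) + γ * x θ) = (1-γ) * (x θ - x (θ-1)) := by ring
      rw [h1, abs_mul, abs_of_pos hγ1', Real.mul_rpow hγ1'.le (abs_nonneg _)]
      rw [show (1-γ) ^ (1-p) * v θ * ((1-γ) ^ p * |x θ - x (θ-1)| ^ p)
          = (1-γ) ^ (1-p) * (1-γ) ^ p * (v θ * |x θ - x (θ-1)| ^ p) by ring,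
        ← Real.rpow_add hγ1', sub_add_cancel, Real.rpow_one]
    rw [hbm, hbp]
    ring
end

section
/- (Proposition 4.2, NN-case, upper part.) Fix an integer θ with −M < θ ≤ N and a real γ ∈ (0, 1), and define u⁻_n = u_{n−1} for −M+1 ≤ n ≤ θ, u⁺_n = u_n for θ ≤ n ≤ N; v⁻_n = v_n for −M+1 ≤ n ≤ θ−1, v⁻_θ = γ^(1−p)·v_θ; v⁺_θ = (1−γ)^(1−p)·v_θ, v⁺_n = v_n for θ+1 ≤ n ≤ N. Suppose A⁻ ≥ 0 satisfies (Σ_{n=−M+1}^{θ} u⁻_n |x_n|^q)^(1/q) ≤ A⁻ · (Σ_{n=−M+1}^{θ} v⁻_n |x_n − x_{n+1}|^p)^(1/p) for every real sequence (x_n)_{n=−M+1}^{θ+1} with x_{θ+1} = 0, and A⁺ ≥ 0 satisfies (Σ_{n=θ}^{N} u⁺_n |x_n|^q)^(1/q) ≤ A⁺ · (Σ_{n=θ}^{N} v⁺_n |x_n − x_{n−1}|^p)^(1/p) for every real sequence (x_n)_{n=θ−1}^{N} with x_{θ−1} = 0. Then for every real sequence (x_n)_{n=−M}^{N} one has (Σ_{n=−M}^{N}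 u_n |x_n − m(x)|^q)^(1/q) ≤ max(A⁻, A⁺) · (Σ_{n=−M+1}^{N} v_n |x_n − x_{n−1}|^p)^(1/p), where m(x) is the unique real constant m satisfying Σ_{n=−M}^{N} u_n |x_n − m|^(q−2) (x_n − m) = 0. -/
open Finset

private lemma rpow_mul_self' {x : ℝ} (hx : 0 < x) (y : ℝ) : x ^ y * x = x ^ (y + 1) := by
  have h2 := Real.rpow_add hx y 1
  rw [Real.rpow_one] at h2
  rw [h2]

private lemma rpow_superadd' {a b s : ℝ} (ha : 0 ≤ a) (hb : 0 ≤ b) (hs : 1 ≤ s) :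
    a ^ s + b ^ s ≤ (a + b) ^ s := by
  have hs0 : (0:ℝ) < s := by linarith
  have key : ∀ c : ℝ, 0 ≤ c → c ≤ a + b → c ^ s ≤ (a + b) ^ (s - 1) * c := by
    intro c hc hcab
    rcases eq_or_lt_of_le hc with h | h
    · rw [← h, Real.zero_rpow hs0.ne', mul_zero]
    · calc c ^ s = c ^ (s - 1) * c := by rw [rpow_mul_self' h]; ring_nf
        _ ≤ (a + b) ^ (s - 1) * c := by gcongr
  rcases eq_or_lt_of_le (by linarith : (0:ℝ) ≤ a + b) with h | h
  · have ha0 : a = 0 := by linarith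
    have hb0 : b = 0 := by linarith
    simp [ha0, hb0, Real.zero_rpow hs0.ne']
  · calc a ^ s + b ^ s ≤ (a+b)^(s-1) * a + (a+b)^(s-1) * b :=
        add_le_add (key a ha (by linarith)) (key b hb (by linarith))
    _ = (a+b)^(s-1) * (a+b) := by ring
    _ = (a+b)^s := by rw [rpow_mul_self' h]; ring_nf

private lemma key_ineq' {q : ℝ} (hq : 1 < q) (a b : ℝ) :
    |b| ^ q + q * |b| ^ (q - 2) * b * (a - b) ≤ |a| ^ q := by
  have hq0 : (0:ℝ) < q := by linarith
  rcases eq_or_ne b 0 with rfl | hb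
  · simp [Real.zero_rpow hq0.ne']
    positivity
  · have hb' : 0 < |b| := abs_pos.mpr hb
    have hbb : |b| ^ (q - 2) * b * b = |b| ^ q := by
      have hb2 : b * b = |b| * |b| := by
        rcases abs_cases b with ⟨h, _⟩ | ⟨h, _⟩ <;> nlinarith
      rw [mul_assoc, hb2, ← mul_assoc, rpow_mul_self' hb', rpow_mul_self' hb']
      ring_nf
    have h1 : |b| ^ (q - 2) * b * a ≤ |b| ^ (q - 1) * |a| := by
      calc |b| ^ (q-2) * b * a = |b| ^ (q-2) * (b * a) := by ring
        _ ≤ |b| ^ (q-2) * |b * a| :=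
            mul_le_mul_of_nonneg_left (le_abs_self _) (by positivity)
        _ = |b| ^ (q-1) * |a| := by
            rw [abs_mul, ← mul_assoc, rpow_mul_self' hb']; ring_nf
    have hconj : Real.HolderConjugate q (q / (q-1)) := Real.HolderConjugate.conjExponent hq
    have h2 : |a| * |b| ^ (q - 1) ≤ |a| ^ q / q + (|b| ^ (q-1)) ^ (q/(q-1)) / (q/(q-1)) :=
      Real.young_inequality_of_nonneg (abs_nonneg a) (by positivity) hconj
    have hq1 : q - 1 ≠ 0 := sub_ne_zero_of_ne (by linarith)
    have h3 : (|b| ^ (q-1)) ^ (q/(q-1)) = |b| ^ q := by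
      rw [← Real.rpow_mul hb'.le]
      congr 1
      field_simp
    rw [h3] at h2
    have h4 : |a| ^ q / q + |b| ^ q / (q/(q-1)) = |a| ^ q / q + |b| ^ q * (q-1) / q := by
      field_simp
    rw [h4] at h2
    have h5 : q * (|b| ^ (q-2) * b * a) ≤ q * (|b| ^ (q-1) * |a|) :=
      mul_le_mul_of_nonneg_left h1 hq0.le
    have h6 : q * (|b| ^ (q-1) * |a|) ≤ |a| ^ q + |b| ^ q * (q - 1) := by
      have hy := mul_le_mul_of_nonneg_left h2 hq0.le
      calc q * (|b| ^ (q-1) * |a|) = q * (|a| * |b| ^ (q-1)) := by ring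
        _ ≤ q * (|a| ^ q / q + |b| ^ q * (q-1) / q) := hy
        _ = |a| ^ q + |b| ^ q * (q - 1) := by field_simp
    nlinarith [h5, h6, hbb]

private lemma mean_min' {q : ℝ} (hq : 1 < q) (s : Finset ℤ) (u x : ℤ → ℝ)
    (hu : ∀ n ∈ s, 0 ≤ u n) (m c : ℝ)
    (hm : ∑ n ∈ s, u n * |x n - m| ^ (q-2) * (x n - m) = 0) :
    ∑ n ∈ s, u n * |x n - m| ^ q ≤ ∑ n ∈ s, u n * |x n - c| ^ q := by
  have step : ∀ n ∈ s, u n * |x n - m| ^ q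
      + (q*(m-c)) * (u n * |x n - m| ^ (q-2) * (x n - m)) ≤ u n * |x n - c| ^ q := by
    intro n hn
    have h := key_ineq' hq (x n - c) (x n - m)
    have h2 := mul_le_mul_of_nonneg_left h (hu n hn)
    calc u n * |x n - m| ^ q + (q*(m-c)) * (u n * |x n - m| ^ (q-2) * (x n - m))
        = u n * (|x n - m| ^ q + q * |x n - m| ^ (q-2) * (x n - m) * ((x n - c) - (x n - m))) := by
          ring
      _ ≤ u n * |x n - c| ^ q := h2
  calc ∑ n ∈ s, u n * |x n - m| ^ q
      = ∑ n ∈ s, (u n * |x n - m| ^ q + (q*(m-c)) * (u n * |x n - m| ^ (q-2) * (x n - m))) := by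
        rw [Finset.sum_add_distrib, ← Finset.mul_sum, hm, mul_zero, add_zero]
    _ ≤ ∑ n ∈ s, u n * |x n - c| ^ q := Finset.sum_le_sum step

private lemma scale_pow' {q p L A R : ℝ} (hq : 0 < q) (hL : 0 ≤ L) (hA : 0 ≤ A) (hR : 0 ≤ R)
    (h : L ^ (1/q) ≤ A * R ^ (1/p)) : L ≤ A ^ q * R ^ (q/p) := by
  have h2 := Real.rpow_le_rpow (Real.rpow_nonneg hL _) h hq.le
  rwa [← Real.rpow_mul hL, one_div, inv_mul_cancel₀ hq.ne', Real.rpow_one,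
    Real.mul_rpow hA (Real.rpow_nonneg hR _), ← Real.rpow_mul hR,
    one_div, inv_mul_eq_div] at h2

private lemma unscale' {q p A R : ℝ} (hq : 0 < q) (hp : 0 < p) (hA : 0 ≤ A) (hR : 0 ≤ R) :
    (A ^ q * R ^ (q/p)) ^ (1/q) = A * R ^ (1/p) := by
  have hexp : q / p * (1 / q) = 1 / p := by
    field_simp
  have hexp2 : q * (1 / q) = 1 := by field_simp
  rw [Real.mul_rpow (Real.rpow_nonneg hA _) (Real.rpow_nonneg hR _),
    ← Real.rpow_mul hA, ← Real.rpow_mul hR, hexp, hexp2, Real.rpow_one]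

set_option maxHeartbeats 2000000 in
/-- Proposition 4.2, NN-case, upper part.  In the conclusion, `m` ranges over the (unique)
generalized mean of `x` with respect to `u`, characterized by
`∑ u_n |x_n - m|^(q-2) (x_n - m) = 0`. -/
theorem nn_split_upper (p q : ℝ) (hp : 1 < p) (hpq : p ≤ q)
    (M N : ℤ) (hMN : -M < N)
    (u v : ℤ → ℝ)
    (hu : ∀ n ∈ Finset.Icc (-M) N, 0 < u n)
    (hv : ∀ n ∈ Finset.Icc (-M) N, 0 < v n)
    (θ : ℤ) (hθ1 : -M < θ) (hθ2 : θ ≤ N)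
    (γ : ℝ) (hγ : γ ∈ Set.Ioo (0:ℝ) 1)
    (uminus uplus vminus vplus : ℤ → ℝ)
    (hum : ∀ n ∈ Finset.Icc (-M+1) θ, uminus n = u (n-1))
    (hup : ∀ n ∈ Finset.Icc θ N, uplus n = u n)
    (hvm : ∀ n ∈ Finset.Icc (-M+1) (θ-1), vminus n = v n)
    (hvmθ : vminus θ = γ ^ (1-p) * v θ)
    (hvpθ : vplus θ = (1-γ) ^ (1-p) * v θ)
    (hvp : ∀ n ∈ Finset.Icc (θ+1) N, vplus n = v n)
    (Aneg Apos : ℝ) (hAneg : 0 ≤ Aneg) (hApos : 0 ≤ Apos)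
    (hneg : ∀ x : ℤ → ℝ, x (θ+1) = 0 →
      (∑ n ∈ Finset.Icc (-M+1) θ, uminus n * |x n| ^ q) ^ (1/q) ≤
        Aneg * (∑ n ∈ Finset.Icc (-M+1) θ, vminus n * |x n - x (n+1)| ^ p) ^ (1/p))
    (hpos : ∀ x : ℤ → ℝ, x (θ-1) = 0 →
      (∑ n ∈ Finset.Icc θ N, uplus n * |x n| ^ q) ^ (1/q) ≤
        Apos * (∑ n ∈ Finset.Icc θ N, vplus n * |x n - x (n-1)| ^ p) ^ (1/p)) :
    ∀ x : ℤ → ℝ, ∀ m : ℝ,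
      (∑ n ∈ Finset.Icc (-M) N, u n * |x n - m| ^ (q-2) * (x n - m) = 0) →
      (∑ n ∈ Finset.Icc (-M) N, u n * |x n - m| ^ q) ^ (1/q) ≤
        max Aneg Apos * (∑ n ∈ Finset.Icc (-M+1) N, v n * |x n - x (n-1)| ^ p) ^ (1/p) := by
  intro x m hm
  obtain ⟨hγ0, hγ1⟩ := hγ
  have hq : 1 < q := lt_of_lt_of_le hp hpq
  have hq0 : (0:ℝ) < q := by linarith
  have hp0 : (0:ℝ) < p := by linarith
  set c : ℝ := (1-γ) * x (θ-1) + γ * x θ with hc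
  -- splitting lemmas
  have hsplitS : ∀ f : ℤ → ℝ, ∑ n ∈ Finset.Icc (-M) N, f n
      = ∑ n ∈ Finset.Icc (-M) (θ-1), f n + ∑ n ∈ Finset.Icc θ N, f n := by
    intro f
    have hset : Finset.Icc (-M) N = Finset.Icc (-M) (θ-1) ∪ Finset.Icc θ N := by
      ext n; simp only [Finset.mem_Icc, Finset.mem_union]; omega
    rw [hset, Finset.sum_union]
    rw [Finset.disjoint_left]
    intro a ha hb
    simp only [Finset.mem_Icc] at ha hb
    omega
  have etop : Finset.Icc (-M+1) θ = insert θ (Finset.Icc (-M+1) (θ-1)) := by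
    ext n; simp only [Finset.mem_Icc, Finset.mem_insert]; omega
  have ebot : Finset.Icc θ N = insert θ (Finset.Icc (θ+1) N) := by
    ext n; simp only [Finset.mem_Icc, Finset.mem_insert]; omega
  have hnotmem1 : θ ∉ Finset.Icc (-M+1) (θ-1) := by simp [Finset.mem_Icc]
  have hnotmem2 : θ ∉ Finset.Icc (θ+1) N := by simp [Finset.mem_Icc]
  have hsplitR : ∀ f : ℤ → ℝ, ∑ n ∈ Finset.Icc (-M+1) N, f n
      = ∑ n ∈ Finset.Icc (-M+1) (θ-1), f n + f θ + ∑ n ∈ Finset.Icc (θ+1) N, f n := by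
    intro f
    have hset : Finset.Icc (-M+1) N = Finset.Icc (-M+1) θ ∪ Finset.Icc (θ+1) N := by
      ext n; simp only [Finset.mem_Icc, Finset.mem_union]; omega
    rw [hset, Finset.sum_union, etop, Finset.sum_insert hnotmem1]
    · ring
    · rw [Finset.disjoint_left]
      intro a ha hb
      simp only [Finset.mem_Icc] at ha hb
      omega
  -- test sequences
  set zm : ℤ → ℝ := fun n => if n ≤ θ then x (n-1) - c else 0 with hzm
  set zp : ℤ → ℝ := fun n => if θ ≤ n then x n - c else 0 with hzp
  have hzm0 : zm (θ+1) = 0 := by rw [hzm]; simp only; rw [if_neg (by omega)]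
  have hzp0 : zp (θ-1) = 0 := by rw [hzp]; simp only; rw [if_neg (by omega)]
  have Hneg := hneg zm hzm0
  have Hpos := hpos zp hzp0
  -- abbreviations
  set T : ℝ := v θ * |x θ - x (θ-1)| ^ p with hT
  set Lm : ℝ := ∑ n ∈ Finset.Icc (-M) (θ-1), u n * |x n - c| ^ q with hLm
  set Lp : ℝ := ∑ n ∈ Finset.Icc θ N, u n * |x n - c| ^ q with hLp
  set Rm : ℝ := (∑ n ∈ Finset.Icc (-M+1) (θ-1), v n * |x n - x (n-1)| ^ p) + γ * T with hRm
  set Rp : ℝ := (1-γ) * T + ∑ n ∈ Finset.Icc (θ+1) N, v n * |x n - x (n-1)| ^ p with hRp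
  set R : ℝ := ∑ n ∈ Finset.Icc (-M+1) N, v n * |x n - x (n-1)| ^ p with hR
  set S : ℝ := ∑ n ∈ Finset.Icc (-M) N, u n * |x n - m| ^ q with hS
  have hvθ : 0 < v θ := hv θ (by simp only [Finset.mem_Icc]; omega)
  have hT0 : 0 ≤ T := by rw [hT]; positivity
  -- rewrite Hneg
  have E1 : ∑ n ∈ Finset.Icc (-M+1) θ, uminus n * |zm n| ^ q = Lm := by
    rw [hLm]
    have emb : Finset.Icc (-M+1) θ = (Finset.Icc (-M) (θ-1)).map (addRightEmbedding 1) := by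
      rw [Finset.map_add_right_Icc]
      congr 1
      ring
    rw [emb, Finset.sum_map]
    apply Finset.sum_congr rfl
    intro n hn
    simp only [Finset.mem_Icc] at hn
    simp only [addRightEmbedding_apply]
    rw [hum (n+1) (by simp only [Finset.mem_Icc]; omega)]
    have hz : zm (n+1) = x n - c := by
      rw [hzm]; simp only; rw [if_pos (by omega)]
      norm_num
    rw [hz]
    norm_num
  have E2 : ∑ n ∈ Finset.Icc (-M+1) θ, vminus n * |zm n - zm (n+1)| ^ p = Rm := by
    rw [etop, Finset.sum_insert hnotmem1, hRm]
    have tθ : vminus θ * |zm θ - zm (θ+1)| ^ p = γ * T := by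
      have h1 : zm θ = x (θ-1) - c := by rw [hzm]; simp only; rw [if_pos le_rfl]
      rw [h1, hzm0, hvmθ, sub_zero]
      have h3 : x (θ-1) - c = γ * (x (θ-1) - x θ) := by rw [hc]; ring
      rw [h3, abs_mul, abs_of_pos hγ0, Real.mul_rpow hγ0.le (abs_nonneg _), abs_sub_comm]
      have h4 : γ ^ (1-p) * γ ^ p = γ := by
        rw [← Real.rpow_add hγ0]
        norm_num
      calc γ^(1-p) * v θ * (γ^p * |x θ - x (θ-1)|^p)
          = (γ^(1-p) * γ^p) * (v θ * |x θ - x (θ-1)|^p) := by ring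
        _ = γ * T := by rw [h4, hT]
    rw [tθ]
    have hrest : ∑ n ∈ Finset.Icc (-M+1) (θ-1), vminus n * |zm n - zm (n+1)| ^ p
        = ∑ n ∈ Finset.Icc (-M+1) (θ-1), v n * |x n - x (n-1)| ^ p := by
      apply Finset.sum_congr rfl
      intro n hn
      simp only [Finset.mem_Icc] at hn
      rw [hvm n (by simp only [Finset.mem_Icc]; omega)]
      have h1 : zm n = x (n-1) - c := by rw [hzm]; simp only; rw [if_pos (by omega)]
      have h2 : zm (n+1) = x n - c := by
        rw [hzm]; simp only; rw [if_pos (by omega)]; norm_num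
      rw [h1, h2, show x (n-1) - c - (x n - c) = x (n-1) - x n by ring, abs_sub_comm]
    rw [hrest]
    ring
  rw [E1, E2] at Hneg
  -- rewrite Hpos
  have E3 : ∑ n ∈ Finset.Icc θ N, uplus n * |zp n| ^ q = Lp := by
    rw [hLp]
    apply Finset.sum_congr rfl
    intro n hn
    simp only [Finset.mem_Icc] at hn
    rw [hup n (by simp only [Finset.mem_Icc]; omega)]
    have hz : zp n = x n - c := by rw [hzp]; simp only; rw [if_pos (by omega)]
    rw [hz]
  have E4 : ∑ n ∈ Finset.Icc θ N, vplus n * |zp n - zp (n-1)| ^ p = Rp := by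
    rw [ebot, Finset.sum_insert hnotmem2, hRp]
    have tθ : vplus θ * |zp θ - zp (θ-1)| ^ p = (1-γ) * T := by
      have h1 : zp θ = x θ - c := by rw [hzp]; simp only; rw [if_pos le_rfl]
      rw [h1, hzp0, hvpθ, sub_zero]
      have h3 : x θ - c = (1-γ) * (x θ - x (θ-1)) := by rw [hc]; ring
      have hγ1' : (0:ℝ) < 1 - γ := by linarith
      rw [h3, abs_mul, abs_of_pos hγ1', Real.mul_rpow hγ1'.le (abs_nonneg _)]
      have h4 : (1-γ) ^ (1-p) * (1-γ) ^ p = 1 - γ := by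
        rw [← Real.rpow_add hγ1']
        norm_num
      calc (1-γ)^(1-p) * v θ * ((1-γ)^p * |x θ - x (θ-1)|^p)
          = ((1-γ)^(1-p) * (1-γ)^p) * (v θ * |x θ - x (θ-1)|^p) := by ring
        _ = (1-γ) * T := by rw [h4, hT]
    rw [tθ]
    have hrest : ∑ n ∈ Finset.Icc (θ+1) N, vplus n * |zp n - zp (n-1)| ^ p
        = ∑ n ∈ Finset.Icc (θ+1) N, v n * |x n - x (n-1)| ^ p := by
      apply Finset.sum_congr rfl
      intro n hn
      simp only [Finset.mem_Icc] at hn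
      rw [hvp n (by simp only [Finset.mem_Icc]; omega)]
      have h1 : zp n = x n - c := by rw [hzp]; simp only; rw [if_pos (by omega)]
      have h2 : zp (n-1) = x (n-1) - c := by rw [hzp]; simp only; rw [if_pos (by omega)]
      rw [h1, h2, show x n - c - (x (n-1) - c) = x n - x (n-1) by ring]
    rw [hrest]
  rw [E3, E4] at Hpos
  -- nonnegativity
  have hsum_nonneg : ∀ (a b : ℤ), (∀ n ∈ Finset.Icc a b, (0:ℝ) ≤ v n) →
      0 ≤ ∑ n ∈ Finset.Icc a b, v n * |x n - x (n-1)| ^ p := by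
    intro a b h
    apply Finset.sum_nonneg
    intro n hn
    have := h n hn
    positivity
  have hRm0 : 0 ≤ Rm := by
    rw [hRm]
    have h1 := hsum_nonneg (-M+1) (θ-1) (fun n hn => by
      have hn' := Finset.mem_Icc.mp hn
      exact (hv n (Finset.mem_Icc.mpr (by omega))).le)
    have h2 : 0 ≤ γ * T := by positivity
    linarith
  have hRp0 : 0 ≤ Rp := by
    rw [hRp]
    have h1 := hsum_nonneg (θ+1) N (fun n hn => by
      have hn' := Finset.mem_Icc.mp hn
      exact (hv n (Finset.mem_Icc.mpr (by omega))).le)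
    have h2 : 0 ≤ (1-γ) * T := by
      have : (0:ℝ) ≤ 1 - γ := by linarith
      positivity
    linarith
  have hR0 : 0 ≤ R := by
    rw [hR]
    apply Finset.sum_nonneg
    intro n hn
    have hn' := Finset.mem_Icc.mp hn
    have := (hv n (Finset.mem_Icc.mpr (by omega))).le
    positivity
  have hLm0 : 0 ≤ Lm := by
    rw [hLm]
    apply Finset.sum_nonneg
    intro n hn
    have hn' := Finset.mem_Icc.mp hn
    have := (hu n (Finset.mem_Icc.mpr (by omega))).le
    positivity
  have hLp0 : 0 ≤ Lp := by
    rw [hLp]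
    apply Finset.sum_nonneg
    intro n hn
    have hn' := Finset.mem_Icc.mp hn
    have := (hu n (Finset.mem_Icc.mpr (by omega))).le
    positivity
  have hS0 : 0 ≤ S := by
    rw [hS]
    apply Finset.sum_nonneg
    intro n hn
    have := (hu n hn).le
    positivity
  -- core chain
  have hA : 0 ≤ max Aneg Apos := le_max_of_le_left hAneg
  have hchain1 : S ≤ Lm + Lp := by
    have h1 : S ≤ ∑ n ∈ Finset.Icc (-M) N, u n * |x n - c| ^ q :=
      mean_min' hq _ u x (fun n hn => (hu n hn).le) m c hm
    have h2 := hsplitS (fun n => u n * |x n - c| ^ q)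
    rw [hLm, hLp]
    rw [h2] at h1
    exact h1
  have hLmB : Lm ≤ Aneg ^ q * Rm ^ (q/p) := scale_pow' hq0 hLm0 hAneg hRm0 Hneg
  have hLpB : Lp ≤ Apos ^ q * Rp ^ (q/p) := scale_pow' hq0 hLp0 hApos hRp0 Hpos
  have hsup : Rm ^ (q/p) + Rp ^ (q/p) ≤ (Rm + Rp) ^ (q/p) :=
    rpow_superadd' hRm0 hRp0 ((one_le_div hp0).mpr hpq)
  have hRR : Rm + Rp = R := by
    rw [hRm, hRp, hR, hsplitR (fun n => v n * |x n - x (n-1)| ^ p)]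
    rw [hT]
    ring
  have hAq : Aneg ^ q ≤ (max Aneg Apos) ^ q :=
    Real.rpow_le_rpow hAneg (le_max_left _ _) hq0.le
  have hAq' : Apos ^ q ≤ (max Aneg Apos) ^ q :=
    Real.rpow_le_rpow hApos (le_max_right _ _) hq0.le
  have hfinal : S ≤ (max Aneg Apos) ^ q * R ^ (q/p) := by
    have h1 : Aneg ^ q * Rm ^ (q/p) ≤ (max Aneg Apos) ^ q * Rm ^ (q/p) :=
      mul_le_mul_of_nonneg_right hAq (Real.rpow_nonneg hRm0 _)
    have h2 : Apos ^ q * Rp ^ (q/p) ≤ (max Aneg Apos) ^ q * Rp ^ (q/p) :=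
      mul_le_mul_of_nonneg_right hAq' (Real.rpow_nonneg hRp0 _)
    have h3 : (max Aneg Apos) ^ q * (Rm ^ (q/p) + Rp ^ (q/p))
        ≤ (max Aneg Apos) ^ q * (Rm + Rp) ^ (q/p) :=
      mul_le_mul_of_nonneg_left hsup (Real.rpow_nonneg hA _)
    rw [hRR] at h3
    nlinarith [h1, h2, h3]
  calc S ^ (1/q) ≤ ((max Aneg Apos) ^ q * R ^ (q/p)) ^ (1/q) :=
      Real.rpow_le_rpow hS0 hfinal (by positivity)
    _ = max Aneg Apos * R ^ (1/p) := unscale' hq0 hp0 hA hR0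
end

section
/- (Proposition 4.2, NN-case, lower part.) Fix an integer θ with −M < θ ≤ N and a real γ ∈ (0, 1), and define u⁻_n = u_{n−1} for −M+1 ≤ n ≤ θ, u⁺_n = u_n for θ ≤ n ≤ N; v⁻_n = v_n for −M+1 ≤ n ≤ θ−1, v⁻_θ = γ^(1−p)·v_θ; v⁺_θ = (1−γ)^(1−p)·v_θ, v⁺_n = v_n for θ+1 ≤ n ≤ N. Let A⁻ be the supremum over all not-identically-zero real sequences (x_n)_{n=−M+1}^{θ+1} with x_{θ+1} = 0 of (Σ_{n=−M+1}^{θ} u⁻_n |x_n|^q)^(1/q) / (Σ_{n=−M+1}^{θ} v⁻_n |x_n − x_{n+1}|^p)^(1/p), and let A⁺ be the supremum over all not-identically-zero real sequences (x_n)_{n=θ−1}^{N} with x_{θ−1} = 0 of (Σ_{n=θ}^{N} u⁺_n |x_n|^q)^(1/q) / (Σ_{n=θ}^{N} v⁺_n |x_n − x_{n−1}|^p)^(1/p). If A ≥ 0 is a constant such that (Σ_{n=−M}^{N} u_n |x_n − m(x)|^q)^(1/q) ≤ A · (Σ_{n=−M+1}^{N} v_n |x_n − x_{n−1}|^p)^(1/p)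 holds for every real sequence (x_n)_{n=−M}^{N}, where m(x) is the unique real constant m satisfying Σ_{n=−M}^{N} u_n |x_n − m|^(q−2) (x_n − m) = 0, then A ≥ 2^(1/q − 1/p) · min(A⁻, A⁺). -/
/-!
Take near-extremal sequences `x` for `A⁻` and `z` for `A⁺`. Replacing them by `|x|`, `|z|` keeps
the `q`-sums and does not increase the `p`-energies. Glue `a|x|` (shifted by one) on `[-M, θ-1]`
to `-b|z|` on `[θ, N]`, with `a, b > 0` chosen so that `0` is the generalized mean of the glued
sequence; its `q`-sum is `a^q S⁻ + b^q S⁺`. Its `p`-energy is at most `a^p D⁻ + b^p D⁺`: the only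
new jump, at `θ`, is split by `(s + t)^p ≤ γ^(1-p) s^p + (1-γ)^(1-p) t^p`, which is where the
weights `v⁻_θ`, `v⁺_θ` come from. The same inequality with weight `1/2` and exponent `q/p` gives
`(X + Y)^(q/p) ≤ 2^(q/p-1) (X^(q/p) + Y^(q/p))`, the source of the factor `2^(1/q - 1/p)`.
-/

open Finset

lemma add_rpow_le_weighted {p w s t : ℝ} (hp : 1 ≤ p) (hw0 : 0 < w) (hw1 : w < 1)
    (hs : 0 ≤ s) (ht : 0 ≤ t) :
    (s + t) ^ p ≤ w ^ (1 - p) * s ^ p + (1 - w) ^ (1 - p) * t ^ p := by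
  have hw1' : 0 < 1 - w := by linarith
  have key := Real.rpow_arith_mean_le_arith_mean_rpow univ ![w, 1 - w] ![s / w, t / (1 - w)]
    (by intro i _; fin_cases i <;> simp <;> linarith) (by simp [Fin.sum_univ_succ])
    (by intro i _; fin_cases i <;> simp <;> positivity) hp
  simp only [Fin.sum_univ_two, Matrix.cons_val_zero, Matrix.cons_val_one] at key
  rw [mul_div_cancel₀ _ hw0.ne', mul_div_cancel₀ _ hw1'.ne'] at key
  refine key.trans_eq ?_
  rw [Real.div_rpow hs hw0.le, Real.div_rpow ht hw1'.le, Real.rpow_sub hw0, Real.rpow_sub hw1',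
    Real.rpow_one, Real.rpow_one]
  field_simp

lemma abs_rpow_sub_two_mul_of_nonneg {q t : ℝ} (hq : q ≠ 1) (ht : 0 ≤ t) :
    |t| ^ (q - 2) * t = t ^ (q - 1) := by
  rw [abs_of_nonneg ht, ← Real.rpow_add_one' ht (by contrapose! hq; linarith)]
  ring_nf

lemma abs_mul_sub_mul_rpow {c : ℝ} (hc : 0 ≤ c) (s t p : ℝ) :
    |c * s - c * t| ^ p = c ^ p * |s - t| ^ p := by
  rw [← mul_sub, abs_mul, abs_of_nonneg hc, Real.mul_rpow hc (abs_nonneg _)]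

lemma mul_rpow_lt_of_scale {p q r X S c : ℝ} (hp : 0 < p) (hq : 0 < q) (hX : 0 ≤ X)
    (hS : 0 ≤ S) (hc : 0 < c) (h : r * X ^ (1 / p) < S ^ (1 / q)) :
    r * (c ^ p * X) ^ (1 / p) < (c ^ q * S) ^ (1 / q) := by
  rw [Real.mul_rpow (by positivity) hX, Real.mul_rpow (by positivity) hS, one_div, one_div,
    Real.rpow_rpow_inv hc.le hp.ne', Real.rpow_rpow_inv hc.le hq.ne', ← one_div, ← one_div,
    mul_left_comm]
  exact mul_lt_mul_of_pos_left h hc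

lemma two_rpow_mul_add_rpow_lt {p q r X Y S T : ℝ} (hp : 0 < p) (hpq : p ≤ q) (hr : 0 ≤ r)
    (hX : 0 ≤ X) (hY : 0 ≤ Y) (hS : 0 ≤ S) (hT : 0 ≤ T)
    (hXS : r * X ^ (1 / p) < S ^ (1 / q)) (hYT : r * Y ^ (1 / p) < T ^ (1 / q)) :
    2 ^ (1 / q - 1 / p) * r * (X + Y) ^ (1 / p) < (S + T) ^ (1 / q) := by
  have hq : 0 < q := hp.trans_le hpq
  have raise : ∀ {Z W : ℝ}, 0 ≤ Z → 0 ≤ W → r * Z ^ (1 / p) < W ^ (1 / q) →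
      r ^ q * Z ^ (q / p) < W := fun hZ hW h => by
    rwa [one_div q, Real.lt_rpow_inv_iff_of_pos (by positivity) hW hq,
      Real.mul_rpow hr (by positivity), ← Real.rpow_mul hZ, one_div_mul_eq_div] at h
  have hmean : (X + Y) ^ (q / p) ≤ (1 / 2) ^ (1 - q / p) * (X ^ (q / p) + Y ^ (q / p)) := by
    have := add_rpow_le_weighted ((one_le_div hp).2 hpq) (by norm_num : (0 : ℝ) < 1 / 2)
      (by norm_num) hX hY
    norm_num at this ⊢
    linarith
  rw [one_div q, Real.lt_rpow_inv_iff_of_pos (by positivity) (by positivity) hq,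
    Real.mul_rpow (by positivity) (by positivity), Real.mul_rpow (by positivity) hr,
    ← Real.rpow_mul (by norm_num), ← Real.rpow_mul (add_nonneg hX hY),
    show (q⁻¹ - 1 / p) * q = 1 - q / p by field_simp, one_div_mul_eq_div]
  calc 2 ^ (1 - q / p) * r ^ q * (X + Y) ^ (q / p)
      ≤ 2 ^ (1 - q / p) * r ^ q * ((1 / 2) ^ (1 - q / p) * (X ^ (q / p) + Y ^ (q / p))) := by
        gcongr
    _ = r ^ q * X ^ (q / p) + r ^ q * Y ^ (q / p) := by
        rw [mul_comm (2 ^ _ : ℝ), mul_assoc, ← mul_assoc (2 ^ _ : ℝ),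
          ← Real.mul_rpow (by norm_num) (by norm_num)]
        norm_num
        ring
    _ < S + T := add_lt_add (raise hX hS hXS) (raise hY hT hYT)

lemma two_rpow_mul_scale_add_lt {p q r X Y S T a b : ℝ} (hp : 0 < p) (hpq : p ≤ q) (hr : 0 ≤ r)
    (hX : 0 ≤ X) (hY : 0 ≤ Y) (hS : 0 ≤ S) (hT : 0 ≤ T) (ha : 0 < a) (hb : 0 < b)
    (hXS : r * X ^ (1 / p) < S ^ (1 / q)) (hYT : r * Y ^ (1 / p) < T ^ (1 / q)) :
    2 ^ (1 / q - 1 / p) * r * (a ^ p * X + b ^ p * Y) ^ (1 / p) <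
      (a ^ q * S + b ^ q * T) ^ (1 / q) := by
  have hq : 0 < q := hp.trans_le hpq
  exact two_rpow_mul_add_rpow_lt hp hpq hr (by positivity) (by positivity) (by positivity)
    (by positivity) (mul_rpow_lt_of_scale hp hq hX hS ha hXS)
    (mul_rpow_lt_of_scale hp hq hY hT hb hYT)

lemma exists_abs_lt_of_lt_iSup {α : Type*} {S : Finset α} {U V : α → ℝ} {d : α → α}
    {P : (α → ℝ) → Prop} {p q r : ℝ} (hU : ∀ n ∈ S, 0 ≤ U n) (hV : ∀ n ∈ S, 0 ≤ V n)
    (hp : 0 < p) (hq : 0 < q) (hr : 0 < r)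
    (h : r < ⨆ x : {x : α → ℝ // P x}, (∑ n ∈ S, U n * |x.1 n| ^ q) ^ (1 / q) /
      (∑ n ∈ S, V n * |x.1 n - x.1 (d n)| ^ p) ^ (1 / p)) :
    ∃ x, P x ∧ r * (∑ n ∈ S, V n * |(|x n| - |x (d n)|)| ^ p) ^ (1 / p) <
      (∑ n ∈ S, U n * |x n| ^ q) ^ (1 / q) ∧ ∀ t : ℝ, 0 < ∑ n ∈ S, U n * |x n| ^ t := by
  have : Nonempty {x // P x} := not_isEmpty_iff.1 fun _ => by
    rw [Real.iSup_of_isEmpty] at h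
    linarith
  obtain ⟨⟨x, hx⟩, hlt⟩ := exists_lt_of_lt_ciSup h
  dsimp only at hlt
  have hD0 : 0 ≤ ∑ n ∈ S, V n * |(|x n| - |x (d n)|)| ^ p :=
    sum_nonneg fun n hn => mul_nonneg (hV n hn) (by positivity)
  have henergy : ∑ n ∈ S, V n * |(|x n| - |x (d n)|)| ^ p ≤ ∑ n ∈ S, V n * |x n - x (d n)| ^ p :=
    sum_le_sum fun n hn => mul_le_mul_of_nonneg_left
      (Real.rpow_le_rpow (abs_nonneg _) (abs_abs_sub_abs_le_abs_sub _ _) hp.le) (hV n hn)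
  have hpos : 0 < (∑ n ∈ S, V n * |x n - x (d n)| ^ p) ^ (1 / p) := by
    refine (Real.rpow_nonneg (sum_nonneg fun n hn => ?_) _).lt_of_ne fun h0 => ?_
    · have := hV n hn
      positivity
    · rw [← h0, div_zero] at hlt
      linarith
  have hmain : r * (∑ n ∈ S, V n * |(|x n| - |x (d n)|)| ^ p) ^ (1 / p) <
      (∑ n ∈ S, U n * |x n| ^ q) ^ (1 / q) := by
    refine lt_of_le_of_lt ?_ ((lt_div_iff₀ hpos).1 hlt)
    gcongr
  refine ⟨x, hx, hmain, fun t => ?_⟩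
  have hS : ∑ n ∈ S, U n * |x n| ^ q ≠ 0 := by
    intro h0
    rw [h0, Real.zero_rpow (by positivity)] at hmain
    exact hmain.not_ge (mul_nonneg hr.le (Real.rpow_nonneg hD0 _))
  obtain ⟨n, hn, hne⟩ := exists_ne_zero_of_sum_ne_zero hS
  have hUn : 0 < U n := (hU n hn).lt_of_ne fun h0 => hne (by rw [← h0, zero_mul])
  have hxn : 0 < |x n| := abs_pos.2 fun h0 => hne (by rw [h0, abs_zero, Real.zero_rpow hq.ne',
    mul_zero])
  exact sum_pos' (fun i hi => mul_nonneg (hU i hi) (by positivity))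
    ⟨n, hn, mul_pos hUn (Real.rpow_pos_of_pos hxn t)⟩

lemma mul_le_of_forall_pos_lt {c m A : ℝ} (hc : 0 < c) (hA : 0 ≤ A)
    (h : ∀ r, 0 < r → r < m → c * r < A) : c * m ≤ A := by
  by_contra! hlt
  obtain ⟨r, hAr, hrm⟩ := exists_between ((div_lt_iff₀' hc).2 hlt)
  exact (h r ((div_nonneg hA hc.le).trans_lt hAr) hrm).not_gt ((div_lt_iff₀' hc).1 hAr)

lemma shifted_weights_nonneg {θ lo hi : ℤ} {u uminus uplus : ℤ → ℝ} (h1 : lo ≤ θ) (h2 : θ ≤ hi)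
    (hu : ∀ n ∈ Icc lo hi, 0 ≤ u n) (hum : ∀ n ∈ Icc (lo + 1) θ, uminus n = u (n - 1))
    (hup : ∀ n ∈ Icc θ hi, uplus n = u n) :
    (∀ n ∈ Icc (lo + 1) θ, 0 ≤ uminus n) ∧ ∀ n ∈ Icc θ hi, 0 ≤ uplus n := by
  refine ⟨fun n hn => ?_, fun n hn => ?_⟩ <;> rw [mem_Icc] at hn
  · rw [hum n (mem_Icc.2 hn)]
    exact hu _ (mem_Icc.2 ⟨by omega, by omega⟩)
  · rw [hup n (mem_Icc.2 hn)]
    exact hu _ (mem_Icc.2 ⟨by omega, by omega⟩)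

lemma split_weights_nonneg {θ lo hi : ℤ} {v vminus vplus : ℤ → ℝ} {p γ : ℝ} (hγ0 : 0 < γ)
    (hγ1 : γ < 1) (h1 : lo < θ) (h2 : θ ≤ hi) (hv : ∀ n ∈ Icc lo hi, 0 ≤ v n)
    (hvm : ∀ n ∈ Icc (lo + 1) (θ - 1), vminus n = v n) (hvmθ : vminus θ = γ ^ (1 - p) * v θ)
    (hvpθ : vplus θ = (1 - γ) ^ (1 - p) * v θ) (hvp : ∀ n ∈ Icc (θ + 1) hi, vplus n = v n) :
    (∀ n ∈ Icc (lo + 1) θ, 0 ≤ vminus n) ∧ ∀ n ∈ Icc θ hi, 0 ≤ vplus n := by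
  have hvθ : 0 ≤ v θ := hv θ (mem_Icc.2 ⟨h1.le, h2⟩)
  have hγ1' : 0 < 1 - γ := sub_pos.2 hγ1
  refine ⟨fun n hn => ?_, fun n hn => ?_⟩ <;> rw [mem_Icc] at hn
  · rcases hn.2.lt_or_eq with h | rfl
    · rw [hvm n (mem_Icc.2 ⟨hn.1, by omega⟩)]
      exact hv _ (mem_Icc.2 ⟨by omega, by omega⟩)
    · rw [hvmθ]
      positivity
  · rcases hn.1.lt_or_eq with h | rfl
    · rw [hvp n (mem_Icc.2 ⟨by omega, hn.2⟩)]
      exact hv _ (mem_Icc.2 ⟨by omega, by omega⟩)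
    · rw [hvpθ]
      positivity

lemma sum_Icc_split_s16 (F : ℤ → ℝ) {a b c : ℤ} (hab : a ≤ b) (hbc : b ≤ c + 1) :
    ∑ n ∈ Icc a c, F n = ∑ n ∈ Icc a (b - 1), F n + ∑ n ∈ Icc b c, F n := by
  rw [← sum_union (disjoint_left.2 fun n h1 h2 => by simp only [mem_Icc] at h1 h2; omega)]
  congr 1
  ext n
  simp only [mem_Icc, mem_union]
  omega

lemma sum_Icc_sub_one (F : ℤ → ℝ) (a b : ℤ) :
    ∑ n ∈ Icc a (b - 1), F n = ∑ n ∈ Icc (a + 1) b, F (n - 1) := by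
  refine sum_nbij' (· + 1) (· - 1) ?_ ?_ ?_ ?_ ?_ <;> intro n <;> simp

/-- The left piece is read with a shift by one, matching the indexing `u⁻_n = u_{n-1}`
of the minus problem. -/
def glue (θ : ℤ) (f g : ℤ → ℝ) (n : ℤ) : ℝ := if n < θ then f (n + 1) else g n

section Glue

variable {θ lo hi : ℤ} (f g : ℤ → ℝ)

lemma glue_of_lt {n : ℤ} (h : n < θ) : glue θ f g n = f (n + 1) := if_pos h

lemma glue_of_le {n : ℤ} (h : θ ≤ n) : glue θ f g n = g n := if_neg h.not_gt

lemma sum_glue (Φ : ℤ → ℝ → ℝ) (h1 : lo ≤ θ) (h2 : θ ≤ hi + 1) :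
    ∑ n ∈ Icc lo hi, Φ n (glue θ f g n) =
      ∑ n ∈ Icc (lo + 1) θ, Φ (n - 1) (f n) + ∑ n ∈ Icc θ hi, Φ n (g n) := by
  rw [sum_Icc_split_s16 _ h1 h2, sum_Icc_sub_one]
  congr 1 <;> refine sum_congr rfl fun n hn => ?_ <;> rw [mem_Icc] at hn
  · rw [glue_of_lt _ _ (by omega), sub_add_cancel]
  · rw [glue_of_le _ _ hn.1]

lemma sum_glue_sub (Φ : ℤ → ℝ → ℝ) (h1 : lo < θ) (h2 : θ ≤ hi) :
    ∑ n ∈ Icc (lo + 1) hi, Φ n (glue θ f g n - glue θ f g (n - 1)) =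
      ∑ n ∈ Icc (lo + 1) (θ - 1), Φ n (f (n + 1) - f n) + Φ θ (g θ - f θ) +
        ∑ n ∈ Icc (θ + 1) hi, Φ n (g n - g (n - 1)) := by
  rw [sum_Icc_split_s16 _ (by omega : lo + 1 ≤ θ) (by omega : θ ≤ hi + 1),
    sum_Icc_split_s16 _ (by omega : θ ≤ θ + 1) (by omega : θ + 1 ≤ hi + 1), add_sub_cancel_right,
    Icc_self, sum_singleton, ← add_assoc]
  congr 1
  congr 1
  · refine sum_congr rfl fun n hn => ?_
    rw [mem_Icc] at hn
    rw [glue_of_lt _ _ (by omega), glue_of_lt _ _ (by omega), sub_add_cancel]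
  · rw [glue_of_le _ _ le_rfl, glue_of_lt _ _ (by omega), sub_add_cancel]
  · refine sum_congr rfl fun n hn => ?_
    rw [mem_Icc] at hn
    rw [glue_of_le _ _ (by omega), glue_of_le _ _ (by omega)]

variable {a b : ℝ}

lemma sum_glue_abs_rpow {u uminus uplus : ℤ → ℝ} (h1 : lo ≤ θ) (h2 : θ ≤ hi + 1)
    (hum : ∀ n ∈ Icc (lo + 1) θ, uminus n = u (n - 1)) (hup : ∀ n ∈ Icc θ hi, uplus n = u n)
    (ha : 0 ≤ a) (hb : 0 ≤ b) (q : ℝ) :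
    ∑ n ∈ Icc lo hi, u n * |glue θ (fun n => a * |f n|) (fun n => -(b * |g n|)) n| ^ q =
      a ^ q * ∑ n ∈ Icc (lo + 1) θ, uminus n * |f n| ^ q +
        b ^ q * ∑ n ∈ Icc θ hi, uplus n * |g n| ^ q := by
  refine (sum_glue _ _ (fun n t => u n * |t| ^ q) h1 h2).trans ?_
  rw [mul_sum, mul_sum]
  congr 1 <;> refine sum_congr rfl fun n hn => ?_
  · rw [hum n hn, abs_of_nonneg (by positivity), Real.mul_rpow ha (abs_nonneg _)]
    ring
  · rw [hup n hn, abs_neg, abs_of_nonneg (by positivity), Real.mul_rpow hb (abs_nonneg _)]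
    ring

lemma sum_glue_abs_rpow_sub_two_mul {u uminus uplus : ℤ → ℝ} (h1 : lo ≤ θ) (h2 : θ ≤ hi + 1)
    (hum : ∀ n ∈ Icc (lo + 1) θ, uminus n = u (n - 1)) (hup : ∀ n ∈ Icc θ hi, uplus n = u n)
    (ha : 0 ≤ a) (hb : 0 ≤ b) {q : ℝ} (hq : q ≠ 1) :
    ∑ n ∈ Icc lo hi, u n * |glue θ (fun n => a * |f n|) (fun n => -(b * |g n|)) n| ^ (q - 2) *
        glue θ (fun n => a * |f n|) (fun n => -(b * |g n|)) n =
      a ^ (q - 1) * ∑ n ∈ Icc (lo + 1) θ, uminus n * |f n| ^ (q - 1) -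
        b ^ (q - 1) * ∑ n ∈ Icc θ hi, uplus n * |g n| ^ (q - 1) := by
  refine (sum_glue _ _ (fun n t => u n * |t| ^ (q - 2) * t) h1 h2).trans ?_
  rw [sub_eq_add_neg (a ^ (q - 1) * _), mul_sum, mul_sum, ← sum_neg_distrib]
  congr 1 <;> refine sum_congr rfl fun n hn => ?_
  · rw [hum n hn, mul_assoc, abs_rpow_sub_two_mul_of_nonneg hq (by positivity),
      Real.mul_rpow ha (abs_nonneg _)]
    ring
  · rw [hup n hn, abs_neg, mul_assoc, mul_neg, abs_rpow_sub_two_mul_of_nonneg hq (by positivity),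
      Real.mul_rpow hb (abs_nonneg _)]
    ring

lemma exists_sum_glue_abs_rpow_sub_two_mul_eq_zero {u uminus uplus : ℤ → ℝ} (h1 : lo ≤ θ)
    (h2 : θ ≤ hi + 1) (hum : ∀ n ∈ Icc (lo + 1) θ, uminus n = u (n - 1))
    (hup : ∀ n ∈ Icc θ hi, uplus n = u n) {q : ℝ} (hq : 1 < q)
    (hf : 0 < ∑ n ∈ Icc (lo + 1) θ, uminus n * |f n| ^ (q - 1))
    (hg : 0 < ∑ n ∈ Icc θ hi, uplus n * |g n| ^ (q - 1)) :
    ∃ a b : ℝ, 0 < a ∧ 0 < b ∧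
      ∑ n ∈ Icc lo hi, u n * |glue θ (fun n => a * |f n|) (fun n => -(b * |g n|)) n| ^ (q - 2) *
        glue θ (fun n => a * |f n|) (fun n => -(b * |g n|)) n = 0 := by
  have hq1 : q - 1 ≠ 0 := by linarith
  refine ⟨_, _, Real.rpow_pos_of_pos hg (q - 1)⁻¹, Real.rpow_pos_of_pos hf (q - 1)⁻¹, ?_⟩
  rw [sum_glue_abs_rpow_sub_two_mul f g h1 h2 hum hup (by positivity) (by positivity) hq.ne',
    Real.rpow_inv_rpow hg.le hq1, Real.rpow_inv_rpow hf.le hq1]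
  ring

lemma sum_glue_energy_le {v vminus vplus : ℤ → ℝ} {p γ : ℝ} (h1 : lo < θ) (h2 : θ ≤ hi)
    (hp : 1 ≤ p) (hγ0 : 0 < γ) (hγ1 : γ < 1)
    (hvm : ∀ n ∈ Icc (lo + 1) (θ - 1), vminus n = v n) (hvmθ : vminus θ = γ ^ (1 - p) * v θ)
    (hvpθ : vplus θ = (1 - γ) ^ (1 - p) * v θ) (hvp : ∀ n ∈ Icc (θ + 1) hi, vplus n = v n)
    (hvθ : 0 ≤ v θ) (hf : f (θ + 1) = 0) (hg : g (θ - 1) = 0) (ha : 0 ≤ a) (hb : 0 ≤ b) :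
    ∑ n ∈ Icc (lo + 1) hi, v n * |glue θ (fun n => a * |f n|) (fun n => -(b * |g n|)) n -
        glue θ (fun n => a * |f n|) (fun n => -(b * |g n|)) (n - 1)| ^ p ≤
      a ^ p * ∑ n ∈ Icc (lo + 1) θ, vminus n * |(|f n| - |f (n + 1)|)| ^ p +
        b ^ p * ∑ n ∈ Icc θ hi, vplus n * |(|g n| - |g (n - 1)|)| ^ p := by
  refine (sum_glue_sub _ _ (fun n t => v n * |t| ^ p) h1 h2).trans_le ?_
  rw [sum_Icc_split_s16 _ (by omega : lo + 1 ≤ θ) (by omega : θ ≤ θ + 1),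
    sum_Icc_split_s16 _ (by omega : θ ≤ θ + 1) (by omega : θ + 1 ≤ hi + 1), add_sub_cancel_right,
    Icc_self, sum_singleton, sum_singleton, hf, hg]
  simp only [abs_zero, sub_zero, abs_abs]
  have hleft : ∑ n ∈ Icc (lo + 1) (θ - 1), v n * |(a * |f (n + 1)| - a * |f n|)| ^ p =
      a ^ p * ∑ n ∈ Icc (lo + 1) (θ - 1), vminus n * |(|f n| - |f (n + 1)|)| ^ p := by
    rw [mul_sum]
    refine sum_congr rfl fun n hn => ?_
    rw [hvm n hn, abs_mul_sub_mul_rpow ha, abs_sub_comm]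
    ring
  have hright : ∑ n ∈ Icc (θ + 1) hi, v n * |(-(b * |g n|) - -(b * |g (n - 1)|))| ^ p =
      b ^ p * ∑ n ∈ Icc (θ + 1) hi, vplus n * |(|g n| - |g (n - 1)|)| ^ p := by
    rw [mul_sum]
    refine sum_congr rfl fun n hn => ?_
    rw [hvp n hn, neg_sub_neg, abs_mul_sub_mul_rpow hb, abs_sub_comm]
    ring
  have hjunction : v θ * |(-(b * |g θ|) - a * |f θ|)| ^ p ≤
      a ^ p * (vminus θ * |f θ| ^ p) + b ^ p * (vplus θ * |g θ| ^ p) := by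
    rw [← neg_add', abs_neg, abs_of_nonneg (by positivity), add_comm]
    calc v θ * (a * |f θ| + b * |g θ|) ^ p
        ≤ v θ * (γ ^ (1 - p) * (a * |f θ|) ^ p + (1 - γ) ^ (1 - p) * (b * |g θ|) ^ p) := by
          gcongr
          exact add_rpow_le_weighted hp hγ0 hγ1 (by positivity) (by positivity)
      _ = a ^ p * (vminus θ * |f θ| ^ p) + b ^ p * (vplus θ * |g θ| ^ p) := by
          rw [hvmθ, hvpθ, Real.mul_rpow ha (abs_nonneg _), Real.mul_rpow hb (abs_nonneg _)]
          ring
  rw [hleft, hright]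
  linarith

end Glue

theorem nn_split_lower_general (p q : ℝ) (hp : 1 < p) (hpq : p ≤ q)
    (M N : ℤ)
    (u v : ℤ → ℝ)
    (hu : ∀ n ∈ Finset.Icc (-M) N, 0 < u n)
    (hv : ∀ n ∈ Finset.Icc (-M) N, 0 < v n)
    (θ : ℤ) (hθ1 : -M < θ) (hθ2 : θ ≤ N)
    (γ : ℝ) (hγ : γ ∈ Set.Ioo (0:ℝ) 1)
    (uminus uplus vminus vplus : ℤ → ℝ)
    (hum : ∀ n ∈ Finset.Icc (-M+1) θ, uminus n = u (n-1))
    (hup : ∀ n ∈ Finset.Icc θ N, uplus n = u n)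
    (hvm : ∀ n ∈ Finset.Icc (-M+1) (θ-1), vminus n = v n)
    (hvmθ : vminus θ = γ ^ (1-p) * v θ)
    (hvpθ : vplus θ = (1-γ) ^ (1-p) * v θ)
    (hvp : ∀ n ∈ Finset.Icc (θ+1) N, vplus n = v n)
    (Aneg Apos : ℝ)
    (hAneg : Aneg = ⨆ x : {x : ℤ → ℝ //
        x (θ+1) = 0 ∧ ¬ ∀ n ∈ Finset.Icc (-M+1) (θ+1), x n = 0},
      (∑ n ∈ Finset.Icc (-M+1) θ, uminus n * |x.1 n| ^ q) ^ (1/q) /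
        (∑ n ∈ Finset.Icc (-M+1) θ, vminus n * |x.1 n - x.1 (n+1)| ^ p) ^ (1/p))
    (hApos : Apos = ⨆ x : {x : ℤ → ℝ //
        x (θ-1) = 0 ∧ ¬ ∀ n ∈ Finset.Icc (θ-1) N, x n = 0},
      (∑ n ∈ Finset.Icc θ N, uplus n * |x.1 n| ^ q) ^ (1/q) /
        (∑ n ∈ Finset.Icc θ N, vplus n * |x.1 n - x.1 (n-1)| ^ p) ^ (1/p))
    (A : ℝ) (hA : 0 ≤ A)
    (hineq : ∀ x : ℤ → ℝ, ∀ m : ℝ,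
      (∑ n ∈ Finset.Icc (-M) N, u n * |x n - m| ^ (q-2) * (x n - m) = 0) →
      (∑ n ∈ Finset.Icc (-M) N, u n * |x n - m| ^ q) ^ (1/q) ≤
        A * (∑ n ∈ Finset.Icc (-M+1) N, v n * |x n - x (n-1)| ^ p) ^ (1/p)) :
    (2:ℝ) ^ (1/q - 1/p) * min Aneg Apos ≤ A := by
  obtain ⟨hγ0, hγ1⟩ := hγ
  have hq : 1 < q := hp.trans_le hpq
  have hv' : ∀ n ∈ Icc (-M) N, 0 ≤ v n := fun n hn => (hv n hn).le
  obtain ⟨huminus, huplus⟩ :=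
    shifted_weights_nonneg hθ1.le hθ2 (fun n hn => (hu n hn).le) hum hup
  obtain ⟨hvminus, hvplus⟩ := split_weights_nonneg hγ0 hγ1 hθ1 hθ2 hv' hvm hvmθ hvpθ hvp
  refine mul_le_of_forall_pos_lt (by positivity) hA fun r hr hrmin => ?_
  obtain ⟨x, ⟨hxθ, -⟩, hx, hxpos⟩ := exists_abs_lt_of_lt_iSup huminus hvminus (by linarith)
    (by linarith) hr (hAneg ▸ hrmin.trans_le (min_le_left _ _))
  obtain ⟨z, ⟨hzθ, -⟩, hz, hzpos⟩ := exists_abs_lt_of_lt_iSup huplus hvplus (by linarith)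
    (by linarith) hr (hApos ▸ hrmin.trans_le (min_le_right _ _))
  obtain ⟨a, b, ha, hb, hmean⟩ := exists_sum_glue_abs_rpow_sub_two_mul_eq_zero x z hθ1.le
    (by omega) hum hup hq (hxpos _) (hzpos _)
  have hupper := hineq _ 0 (by simpa only [sub_zero] using hmean)
  simp only [sub_zero] at hupper
  rw [sum_glue_abs_rpow x z hθ1.le (by omega) hum hup ha.le hb.le] at hupper
  have henergy := sum_glue_energy_le x z hθ1 hθ2 hp.le hγ0 hγ1 hvm hvmθ hvpθ hvp
    (hv' θ (mem_Icc.2 ⟨hθ1.le, hθ2⟩)) hxθ hzθ ha.le hb.le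
  have hDx : 0 ≤ ∑ n ∈ Icc (-M + 1) θ, vminus n * |(|x n| - |x (n + 1)|)| ^ p :=
    sum_nonneg fun n hn => mul_nonneg (hvminus n hn) (by positivity)
  have hDz : 0 ≤ ∑ n ∈ Icc θ N, vplus n * |(|z n| - |z (n - 1)|)| ^ p :=
    sum_nonneg fun n hn => mul_nonneg (hvplus n hn) (by positivity)
  have hlower := two_rpow_mul_scale_add_lt (by linarith) hpq hr.le hDx hDz (hxpos q).le
    (hzpos q).le ha hb hx hz
  refine lt_of_mul_lt_mul_right (hlower.trans_le (hupper.trans ?_))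
    (Real.rpow_nonneg (by positivity) _)
  gcongr
  exact sum_nonneg fun n hn =>
    mul_nonneg (hv' n (Icc_subset_Icc (by omega) le_rfl hn)) (by positivity)

/-- Proposition 4.2, NN-case, lower part.  `Aneg` and `Apos` are the suprema of the
corresponding Rayleigh-type quotients over not-identically-zero sequences, and in the
hypothesis `hineq`, `m` ranges over the (unique) generalized mean of `x` with respect to `u`,
characterized by `∑ u_n |x_n - m|^(q-2) (x_n - m) = 0`. -/
theorem nn_split_lower (p q : ℝ) (hp : 1 < p) (hpq : p ≤ q)
    (M N : ℤ) (hMN : -M < N)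
    (u v : ℤ → ℝ)
    (hu : ∀ n ∈ Finset.Icc (-M) N, 0 < u n)
    (hv : ∀ n ∈ Finset.Icc (-M) N, 0 < v n)
    (θ : ℤ) (hθ1 : -M < θ) (hθ2 : θ ≤ N)
    (γ : ℝ) (hγ : γ ∈ Set.Ioo (0:ℝ) 1)
    (uminus uplus vminus vplus : ℤ → ℝ)
    (hum : ∀ n ∈ Finset.Icc (-M+1) θ, uminus n = u (n-1))
    (hup : ∀ n ∈ Finset.Icc θ N, uplus n = u n)
    (hvm : ∀ n ∈ Finset.Icc (-M+1) (θ-1), vminus n = v n)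
    (hvmθ : vminus θ = γ ^ (1-p) * v θ)
    (hvpθ : vplus θ = (1-γ) ^ (1-p) * v θ)
    (hvp : ∀ n ∈ Finset.Icc (θ+1) N, vplus n = v n)
    (Aneg Apos : ℝ)
    (hAneg : Aneg = ⨆ x : {x : ℤ → ℝ //
        x (θ+1) = 0 ∧ ¬ ∀ n ∈ Finset.Icc (-M+1) (θ+1), x n = 0},
      (∑ n ∈ Finset.Icc (-M+1) θ, uminus n * |x.1 n| ^ q) ^ (1/q) /
        (∑ n ∈ Finset.Icc (-M+1) θ, vminus n * |x.1 n - x.1 (n+1)| ^ p) ^ (1/p))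
    (hApos : Apos = ⨆ x : {x : ℤ → ℝ //
        x (θ-1) = 0 ∧ ¬ ∀ n ∈ Finset.Icc (θ-1) N, x n = 0},
      (∑ n ∈ Finset.Icc θ N, uplus n * |x.1 n| ^ q) ^ (1/q) /
        (∑ n ∈ Finset.Icc θ N, vplus n * |x.1 n - x.1 (n-1)| ^ p) ^ (1/p))
    (A : ℝ) (hA : 0 ≤ A)
    (hineq : ∀ x : ℤ → ℝ, ∀ m : ℝ,
      (∑ n ∈ Finset.Icc (-M) N, u n * |x n - m| ^ (q-2) * (x n - m) = 0) →
      (∑ n ∈ Finset.Icc (-M) N, u n * |x n - m| ^ q) ^ (1/q) ≤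
        A * (∑ n ∈ Finset.Icc (-M+1) N, v n * |x n - x (n-1)| ^ p) ^ (1/p)) :
    (2:ℝ) ^ (1/q - 1/p) * min Aneg Apos ≤ A :=
  nn_split_lower_general p q hp hpq M N u v hu hv θ hθ1 hθ2 γ hγ uminus uplus vminus vplus hum hup
    hvm hvmθ hvpθ hvp Aneg Apos hAneg hApos A hA hineq
end
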